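/- arXiv:2503.12465 — 8 statements merged into one kernel-verified Lean document; each statement's English description precedes it below -/
import Mathlib

section
/- Let e : (0,∞) → ℝ be a Synge-type EOS. Then for all a, b > 0, exp(∫_a^b e'(ξ)/ξ dξ) ≥ G(a,b), where G(a,b) := ((b + √(b² − a² + (e(a)+1)²)) / (1 + a + e(a))) · exp((e(b) + 1 − √(b² − a² + (e(a)+1)²)) / b). (In particular the quantity b² − a² + (e(a)+1)² under the square root is nonnegative.) -/
noncomputable section

/-- The lower-bound function
`G(a,b) = ((b + √(b² − a² + (e(a)+1)²)) / (1 + a + e(a)))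
            · exp((e(b) + 1 − √(b² − a² + (e(a)+1)²)) / b)`. -/
def Gfun (e : ℝ → ℝ) (a b : ℝ) : ℝ :=
  ((b + Real.sqrt (b ^ 2 - a ^ 2 + (e a + 1) ^ 2)) / (1 + a + e a)) *
    Real.exp ((e b + 1 - Real.sqrt (b ^ 2 - a ^ 2 + (e a + 1) ^ 2)) / b)

/-- Let `e` be a Synge-type EOS. Then for all `a, b > 0`,
`exp(∫_a^b e'(ξ)/ξ dξ) ≥ G(a,b)`; in particular the quantity
`b² − a² + (e(a)+1)²` under the square root is nonnegative. -/
theorem minimum_entropy_stmt2 (e : ℝ → ℝ)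
    (hdiff : ∀ ξ : ℝ, 0 < ξ → DifferentiableAt ℝ e ξ)
    (hpos : ∀ ξ : ℝ, 0 < ξ → 0 < e ξ)
    (hineq : ∀ ξ : ℝ, 0 < ξ → ξ / (e ξ + 1) < deriv e ξ)
    (a b : ℝ) (ha : 0 < a) (hb : 0 < b) :
    0 ≤ b ^ 2 - a ^ 2 + (e a + 1) ^ 2 ∧
      Gfun e a b ≤ Real.exp (∫ ξ in a..b, deriv e ξ / ξ) := by
  -- derivative of `e` is positive
  have hd : ∀ ξ : ℝ, 0 < ξ → 0 < deriv e ξ := fun ξ hξ =>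
    lt_trans (div_pos hξ (by linarith [hpos ξ hξ])) (hineq ξ hξ)
  -- `q ξ := (e ξ + 1)^2 - ξ^2` has positive derivative on `(0, ∞)`
  have hq : ∀ t : ℝ, 0 < t →
      HasDerivAt (fun ξ => (e ξ + 1) ^ 2 - ξ ^ 2)
        (2 * (e t + 1) * deriv e t - 2 * t) t := by
    intro t ht
    have h1 := (((hdiff t ht).hasDerivAt.add_const 1).pow 2).sub (hasDerivAt_pow 2 t)
    refine h1.congr_deriv ?_
    push_cast; ring
  have qmono : ∀ x y : ℝ, 0 < x → x ≤ y →
      (e x + 1) ^ 2 - x ^ 2 ≤ (e y + 1) ^ 2 - y ^ 2 := by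
    intro x y hx hxy
    have hcont : ContinuousOn (fun ξ => (e ξ + 1) ^ 2 - ξ ^ 2) (Set.Icc x y) := by
      intro t ht
      exact ((hq t (lt_of_lt_of_le hx ht.1)).continuousAt).continuousWithinAt
    have hmono := monotoneOn_of_deriv_nonneg (convex_Icc x y) hcont
      (fun t ht => by
        rw [interior_Icc] at ht
        exact ((hq t (lt_of_lt_of_le hx ht.1.le)).differentiableAt).differentiableWithinAt)
      (fun t ht => by
        rw [interior_Icc] at ht
        have ht' : 0 < t := lt_of_lt_of_le hx ht.1.le
        rw [(hq t ht').deriv]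
        have he1 : (0:ℝ) < e t + 1 := by linarith [hpos t ht']
        have := (div_lt_iff₀ he1).1 (hineq t ht')
        nlinarith)
    exact hmono (Set.left_mem_Icc.2 hxy) (Set.right_mem_Icc.2 hxy) hxy
  set C := (e a + 1) ^ 2 - a ^ 2 with hCdef
  set m : ℝ → ℝ := fun ξ => Real.sqrt (ξ ^ 2 + C) with hmdef
  -- lower bound `1 ≤ ξ² + C` for all `ξ > 0`
  have hlow : ∀ ξ : ℝ, 0 < ξ → 1 ≤ ξ ^ 2 + C := by
    intro ξ hξ
    rcases le_total ξ a with hle | hge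
    · have := qmono ξ a hξ hle
      nlinarith [hpos ξ hξ]
    · have h2 := pow_le_pow_left₀ ha.le hge 2
      nlinarith [hpos a ha]
  have hmsq : ∀ ξ : ℝ, 0 < ξ → m ξ ^ 2 = ξ ^ 2 + C := fun ξ hξ =>
    Real.sq_sqrt (by linarith [hlow ξ hξ])
  have hm1 : ∀ ξ : ℝ, 0 < ξ → 1 ≤ m ξ := by
    intro ξ hξ
    have := Real.sqrt_le_sqrt (hlow ξ hξ)
    rwa [Real.sqrt_one] at this
  have hm0 : ∀ ξ : ℝ, 0 < ξ → m ξ ≠ 0 := fun ξ hξ => by linarith [hm1 ξ hξ]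
  -- derivative of `m`
  have hm_deriv : ∀ ξ : ℝ, 0 < ξ → HasDerivAt m (ξ / m ξ) ξ := by
    intro ξ hξ
    have h1 : HasDerivAt (fun x : ℝ => x ^ 2 + C) (2 * ξ) ξ := by
      simpa using (hasDerivAt_pow 2 ξ).add_const C
    have hne : ξ ^ 2 + C ≠ 0 := by linarith [hlow ξ hξ]
    have h2 := (Real.hasDerivAt_sqrt hne).comp ξ h1
    have hval : ξ / m ξ = 1 / (2 * Real.sqrt (ξ ^ 2 + C)) * (2 * ξ) := by
      field_simp [hm0 ξ hξ]
      simp only [hmdef]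
      ring
      rw [mul_inv_cancel₀ (by simpa [hmdef] using hm0 ξ hξ)]
    rw [hval]
    exact h2
  -- the potential function Φ
  set Φ : ℝ → ℝ := fun ξ => (e ξ + 1 - m ξ) / ξ + Real.log (ξ + m ξ) with hΦdef
  have hΦ_deriv : ∀ ξ : ℝ, 0 < ξ →
      HasDerivAt Φ (deriv e ξ / ξ - (e ξ + 1 - m ξ) / ξ ^ 2) ξ := by
    intro ξ hξ
    have hA := (((hdiff ξ hξ).hasDerivAt.add_const 1).sub (hm_deriv ξ hξ)).div
      (hasDerivAt_id ξ) (ne_of_gt hξ)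
    have hxm : 0 < ξ + m ξ := by linarith [hm1 ξ hξ]
    have hB := ((hasDerivAt_id ξ).add (hm_deriv ξ hξ)).log (ne_of_gt hxm)
    have h := hA.add hB
    refine h.congr_deriv ?_
    have hm' := hm0 ξ hξ
    simp only [id, Pi.sub_apply, Pi.add_apply]
    field_simp
    ring
  -- basic positivity on the interval
  have hpos_uIcc : ∀ ξ ∈ Set.uIcc a b, 0 < ξ := by
    intro ξ hξ
    rcases Set.mem_uIcc.mp hξ with ⟨h1, _⟩ | ⟨h1, _⟩ <;> linarith
  have hcont_e : ContinuousOn e (Set.uIcc a b) := fun ξ hξ =>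
    ((hdiff ξ (hpos_uIcc ξ hξ)).continuousAt).continuousWithinAt
  have hcont_m : Continuous m := by
    rw [hmdef]
    exact Real.continuous_sqrt.comp ((continuous_pow 2).add continuous_const)
  -- integrability
  have hIntE : IntervalIntegrable (deriv e) MeasureTheory.volume a b := by
    apply intervalIntegral.intervalIntegrable_deriv_of_nonneg hcont_e
    · intro x hx
      have hx0 : 0 < x := lt_of_lt_of_le (lt_min ha hb) hx.1.le
      exact (hdiff x hx0).hasDerivAt
    · intro x hx
      have hx0 : 0 < x := lt_of_lt_of_le (lt_min ha hb) hx.1.le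
      exact (hd x hx0).le
  have hInt1 : IntervalIntegrable (fun ξ => deriv e ξ / ξ) MeasureTheory.volume a b := by
    have heq : (fun ξ : ℝ => deriv e ξ / ξ) = fun ξ => deriv e ξ * ξ⁻¹ := by
      funext ξ; rw [div_eq_mul_inv]
    rw [heq]
    exact hIntE.mul_continuousOn
      (ContinuousOn.inv₀ continuousOn_id fun ξ hξ => ne_of_gt (hpos_uIcc ξ hξ))
  have hInt2 : IntervalIntegrable (fun ξ => (e ξ + 1 - m ξ) / ξ ^ 2)
      MeasureTheory.volume a b := by
    apply ContinuousOn.intervalIntegrable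
    exact ((hcont_e.add continuousOn_const).sub hcont_m.continuousOn).div
      ((continuous_pow 2).continuousOn)
      (fun ξ hξ => pow_ne_zero 2 (ne_of_gt (hpos_uIcc ξ hξ)))
  -- fundamental theorem of calculus for Φ
  have hFTC := intervalIntegral.integral_eq_sub_of_hasDerivAt
    (fun ξ hξ => hΦ_deriv ξ (hpos_uIcc ξ hξ)) (hInt1.sub hInt2)
  rw [intervalIntegral.integral_sub hInt1 hInt2] at hFTC
  -- sign of the correction integral
  have hD : 0 ≤ ∫ ξ in a..b, (e ξ + 1 - m ξ) / ξ ^ 2 := by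
    rcases le_total a b with hab | hab
    · apply intervalIntegral.integral_nonneg hab
      intro ξ hξ
      have hξ0 : 0 < ξ := lt_of_lt_of_le ha hξ.1
      have h1 : ξ ^ 2 + C ≤ (e ξ + 1) ^ 2 := by
        have := qmono a ξ ha hξ.1
        rw [hCdef]; linarith
      have h2 : m ξ ≤ e ξ + 1 := by
        have h3 := Real.sqrt_le_sqrt h1
        rwa [Real.sqrt_sq (by linarith [hpos ξ hξ0])] at h3
      exact div_nonneg (by linarith) (sq_nonneg ξ)
    · have hsymm : (∫ ξ in a..b, (e ξ + 1 - m ξ) / ξ ^ 2) =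
          -∫ ξ in b..a, (e ξ + 1 - m ξ) / ξ ^ 2 := by
        rw [← intervalIntegral.integral_symm]
      rw [hsymm]
      have h0 : (0:ℝ) ≤ ∫ ξ in b..a, -((e ξ + 1 - m ξ) / ξ ^ 2) := by
        apply intervalIntegral.integral_nonneg hab
        intro ξ hξ
        have hξ0 : 0 < ξ := lt_of_lt_of_le hb hξ.1
        have h1 : (e ξ + 1) ^ 2 ≤ ξ ^ 2 + C := by
          have := qmono ξ a hξ0 hξ.2
          rw [hCdef]; linarith
        have h2 : e ξ + 1 ≤ m ξ := by
          have h3 := Real.sqrt_le_sqrt h1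
          rwa [Real.sqrt_sq (by linarith [hpos ξ hξ0])] at h3
        have := div_nonpos_of_nonpos_of_nonneg (by linarith : e ξ + 1 - m ξ ≤ 0) (sq_nonneg ξ)
        linarith
      rw [intervalIntegral.integral_neg] at h0
      linarith
  -- identify G with exp (Φ b - Φ a)
  have hma : m a = e a + 1 := by
    have haC : a ^ 2 + C = (e a + 1) ^ 2 := by rw [hCdef]; ring
    rw [hmdef]
    show Real.sqrt (a ^ 2 + C) = e a + 1
    rw [haC, Real.sqrt_sq (by linarith [hpos a ha])]
  have hsqrtb : Real.sqrt (b ^ 2 - a ^ 2 + (e a + 1) ^ 2) = m b := by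
    have hbC : b ^ 2 - a ^ 2 + (e a + 1) ^ 2 = b ^ 2 + C := by rw [hCdef]; ring
    rw [hmdef]
    show _ = Real.sqrt (b ^ 2 + C)
    rw [hbC]
  have hΦa : Φ a = Real.log (a + m a) := by
    rw [hΦdef]
    show (e a + 1 - m a) / a + Real.log (a + m a) = _
    rw [hma]
    field_simp
    ring
  have hbm : 0 < b + m b := by linarith [hm1 b hb]
  have ham : 0 < a + m a := by linarith [hm1 a ha]
  have hG : Gfun e a b = Real.exp (Φ b - Φ a) := by
    have hΦsplit : Φ b - Φ a =
        (e b + 1 - m b) / b + (Real.log (b + m b) - Real.log (a + m a)) := by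
      rw [hΦa, hΦdef]; ring
    rw [hΦsplit, Real.exp_add, Real.exp_sub, Real.exp_log hbm, Real.exp_log ham]
    have hden : a + m a = 1 + a + e a := by rw [hma]; ring
    simp only [Gfun, hsqrtb]
    rw [hden]
    ring
  refine ⟨?_, ?_⟩
  · have := hlow b hb
    rw [hCdef] at this
    linarith
  · rw [hG]
    apply Real.exp_le_exp.mpr
    linarith [hFTC, hD]
end
end

section
/- Let d ≥ 1 be an integer, let v, v_* ∈ ℝ^d with |v| < 1 and |v_*| < 1, let ε ∈ [−1,1], and let i ∈ {1,…,d}. Write v = (v_1,…,v_d) and v_* = (v_{1,*},…,v_{d,*}), and define μ = ((1 − v·v_*)/(1 − |v|²)) · ((1 + ε v_i)/(1 + ε v_{i,*})) and μ̃ = (√(1 − |v_*|²)/√(1 − |v|²)) · ((1 + ε v_i)/(1 + ε v_{i,*})). Then μ ≥ (μ̃² + 1)/2. -/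
/-!
Write `A = 1 - |v|²`, `B = 1 - |v_*|²`, `p = 1 + ε v_i`, `q = 1 + ε v_{i,*}`. Clearing the
(positive) denominators, the claim becomes `B p² + A q² ≤ 2 (1 - v·v_*) p q`, and the difference
of the two sides is `(p - q)² - |p v_* - q v|²`. The `i`-th coordinate of `p v_* - q v` is
`v_{i,*} - v_i` (the `ε`-terms cancel), while `p - q = ε (v_i - v_{i,*})`; as `ε² ≤ 1`,
`(p - q)²` is at most the square of that single coordinate, hence at most `|p v_* - q v|²`.
-/

open scoped BigOperators

noncomputable section

/-- Euclidean dot product on `Fin d → ℝ`. -/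
def dotp {d : ℕ} (v w : Fin d → ℝ) : ℝ := ∑ i, v i * w i

/-- Squared Euclidean norm on `Fin d → ℝ`. -/
def nsq {d : ℕ} (v : Fin d → ℝ) : ℝ := ∑ i, (v i) ^ 2

/-- Euclidean norm on `Fin d → ℝ`. -/
def nrm {d : ℕ} (v : Fin d → ℝ) : ℝ := Real.sqrt (nsq v)

section

variable {d : ℕ}

lemma nsq_lt_one_of_nrm_lt_one {v : Fin d → ℝ} (h : nrm v < 1) : nsq v < 1 := by
  simpa using (Real.sqrt_lt' one_pos).mp h

lemma sq_apply_le_nsq (v : Fin d → ℝ) (i : Fin d) : v i ^ 2 ≤ nsq v :=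
  Finset.single_le_sum (f := fun j => v j ^ 2) (fun j _ => sq_nonneg (v j)) (Finset.mem_univ i)

lemma nsq_smul_sub_smul (p q : ℝ) (v w : Fin d → ℝ) :
    nsq (p • w - q • v) = p ^ 2 * nsq w + q ^ 2 * nsq v - 2 * p * q * dotp v w := by
  simp only [nsq, dotp, Finset.mul_sum, ← Finset.sum_add_distrib, ← Finset.sum_sub_distrib]
  exact Finset.sum_congr rfl fun j _ => by simp only [Pi.sub_apply, Pi.smul_apply, smul_eq_mul]; ring

lemma one_add_mul_apply_pos {v : Fin d → ℝ} (hv : nsq v < 1) {ε : ℝ} (hε : ε ^ 2 ≤ 1)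
    (i : Fin d) : 0 < 1 + ε * v i := by
  have hvi : v i ^ 2 < 1 := (sq_apply_le_nsq v i).trans_lt hv
  have : (ε * v i) ^ 2 < 1 := by
    rw [mul_pow]; nlinarith [sq_nonneg ε, sq_nonneg (v i)]
  nlinarith

lemma one_sub_nsq_mul_sq_add_le {ε : ℝ} (hε : ε ^ 2 ≤ 1) (v w : Fin d → ℝ) (i : Fin d) :
    (1 - nsq w) * (1 + ε * v i) ^ 2 + (1 - nsq v) * (1 + ε * w i) ^ 2 ≤
      2 * (1 - dotp v w) * (1 + ε * v i) * (1 + ε * w i) := by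
  set p := 1 + ε * v i
  set q := 1 + ε * w i
  have hcoord : (p • w - q • v) i = w i - v i := by
    simp only [Pi.sub_apply, Pi.smul_apply, smul_eq_mul, p, q]; ring
  have hcoord_le : (w i - v i) ^ 2 ≤ nsq (p • w - q • v) :=
    hcoord ▸ sq_apply_le_nsq (p • w - q • v) i
  have hpq : (p - q) ^ 2 ≤ (w i - v i) ^ 2 := by
    have : (p - q) ^ 2 = ε ^ 2 * (w i - v i) ^ 2 := by ring
    rw [this]
    exact mul_le_of_le_one_left (sq_nonneg _) hε
  rw [nsq_smul_sub_smul] at hcoord_le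
  linarith

end

lemma sqrt_div_sqrt_mul_sq_add_one_le {a b c p q : ℝ} (ha : 0 < a) (hb : 0 ≤ b) (hq : q ≠ 0)
    (h : b * p ^ 2 + a * q ^ 2 ≤ 2 * c * p * q) :
    ((Real.sqrt b / Real.sqrt a * (p / q)) ^ 2 + 1) / 2 ≤ c / a * (p / q) := by
  rw [mul_pow, div_pow, Real.sq_sqrt hb, Real.sq_sqrt ha.le, div_pow]
  field_simp
  calc (b * p ^ 2 + a * q ^ 2) / q ^ 2 ≤ 2 * c * p * q / q ^ 2 := by gcongr
    _ = p * 2 * c / q := by field_simp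

theorem minimum_entropy_stmt4_general (d : ℕ)
    (v vs : Fin d → ℝ) (hv : nrm v < 1) (hvs : nrm vs < 1)
    (ε : ℝ) (hε : ε ∈ Set.Icc (-1 : ℝ) 1) (i : Fin d) :
    (((Real.sqrt (1 - nsq vs) / Real.sqrt (1 - nsq v)) *
        ((1 + ε * v i) / (1 + ε * vs i))) ^ 2 + 1) / 2 ≤
      ((1 - dotp v vs) / (1 - nsq v)) * ((1 + ε * v i) / (1 + ε * vs i)) := by
  have hε2 : ε ^ 2 ≤ 1 := sq_le_one_iff_abs_le_one ε |>.mpr (abs_le.mpr hε)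
  have hA : 0 < 1 - nsq v := sub_pos.mpr (nsq_lt_one_of_nrm_lt_one hv)
  have hB : 0 ≤ 1 - nsq vs := sub_nonneg.mpr (nsq_lt_one_of_nrm_lt_one hvs).le
  have hq : 1 + ε * vs i ≠ 0 := (one_add_mul_apply_pos (nsq_lt_one_of_nrm_lt_one hvs) hε2 i).ne'
  exact sqrt_div_sqrt_mul_sq_add_one_le hA hB hq (one_sub_nsq_mul_sq_add_le hε2 v vs i)

/-- Let `d ≥ 1`, `v, v_* ∈ ℝ^d` with `|v| < 1`, `|v_*| < 1`,
`ε ∈ [−1,1]`, `i ∈ {1,…,d}`. With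
`μ = ((1 − v·v_*)/(1 − |v|²))·((1 + ε v_i)/(1 + ε v_{i,*}))` and
`μ̃ = (√(1 − |v_*|²)/√(1 − |v|²))·((1 + ε v_i)/(1 + ε v_{i,*}))`,
one has `μ ≥ (μ̃² + 1)/2`. -/
theorem minimum_entropy_stmt4 (d : ℕ) (hd : 1 ≤ d)
    (v vs : Fin d → ℝ) (hv : nrm v < 1) (hvs : nrm vs < 1)
    (ε : ℝ) (hε : ε ∈ Set.Icc (-1 : ℝ) 1) (i : Fin d) :
    (((Real.sqrt (1 - nsq vs) / Real.sqrt (1 - nsq v)) *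
        ((1 + ε * v i) / (1 + ε * vs i))) ^ 2 + 1) / 2 ≤
      ((1 - dotp v vs) / (1 - nsq v)) * ((1 + ε * v i) / (1 + ε * vs i)) :=
  minimum_entropy_stmt4_general d v vs hv hvs ε hε i
end
end

section
/- Let e : (0,∞) → ℝ be a Synge-type EOS. Then for all θ, θ_* > 0 and every μ̃ ≥ 0, (1 + θ + e(θ))·(μ̃² + 1)/2 − (1 + θ_* + e(θ_*))·μ̃ + θ_*·exp(∫_θ^{θ_*} e'(ξ)/ξ dξ) − θ ≥ 0. -/
open Set MeasureTheory intervalIntegral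

set_option maxHeartbeats 1000000 in
private lemma synge_key (e : ℝ → ℝ)
    (hdiff : ∀ ξ : ℝ, 0 < ξ → DifferentiableAt ℝ e ξ)
    (hpos : ∀ ξ : ℝ, 0 < ξ → 0 < e ξ)
    (hineq : ∀ ξ : ℝ, 0 < ξ → ξ / (e ξ + 1) < deriv e ξ)
    (θ θs : ℝ) (hθ : 0 < θ) (hθs : 0 < θs) :
    θ - (1 + θ + e θ) / 2 + (1 + θs + e θs) ^ 2 / (2 * (1 + θ + e θ))
      ≤ θs * Real.exp (∫ ξ in θ..θs, deriv e ξ / ξ) := by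
  have hh : (0:ℝ) < 1 + θ + e θ := by linarith [hpos θ hθ]
  obtain ⟨H, hH⟩ : ∃ H : ℝ, H = 1 + θ + e θ := ⟨_, rfl⟩
  obtain ⟨R, hRdef⟩ : ∃ R : ℝ → ℝ,
      R = fun t => θ - H / 2 + (1 + t + e t) ^ 2 / (2 * H) := ⟨_, rfl⟩
  obtain ⟨I, hI⟩ : ∃ I : ℝ, I = ∫ ξ in θ..θs, deriv e ξ / ξ := ⟨_, rfl⟩
  rw [← hH, ← hI]
  have hh' : 0 < H := hH ▸ hh
  -- basic derivative positivity
  have hds : ∀ ξ : ℝ, 0 < ξ → 0 < deriv e ξ := fun ξ hξ =>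
    lt_trans (div_pos hξ (by linarith [hpos ξ hξ])) (hineq ξ hξ)
  have hkey : ∀ ξ : ℝ, 0 < ξ → ξ < (e ξ + 1) * deriv e ξ := by
    intro ξ hξ
    have h1 : (0:ℝ) < e ξ + 1 := by linarith [hpos ξ hξ]
    have h2 := (div_lt_iff₀ h1).mp (hineq ξ hξ)
    nlinarith
  -- monotonicity of t ↦ 1 + t + e t on (0,∞)
  have hA' : ∀ x : ℝ, 0 < x → HasDerivAt (fun t => 1 + t + e t) (1 + deriv e x) x := by
    intro x hx
    exact ((hasDerivAt_id x).const_add 1).add (hdiff x hx).hasDerivAt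
  have hcontA : ContinuousOn (fun t : ℝ => 1 + t + e t) (Ioi 0) := fun x hx =>
    ((hA' x hx).differentiableAt.continuousAt).continuousWithinAt
  have hmono : ∀ s t : ℝ, 0 < s → s ≤ t → 1 + s + e s ≤ 1 + t + e t := by
    have : MonotoneOn (fun t : ℝ => 1 + t + e t) (Ioi 0) := by
      apply monotoneOn_of_deriv_nonneg (convex_Ioi 0) hcontA
      · intro x hx
        rw [interior_Ioi] at hx
        exact (hA' x hx).differentiableAt.differentiableWithinAt
      · intro x hx
        rw [interior_Ioi] at hx
        rw [(hA' x hx).deriv]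
        linarith [hds x hx]
    intro s t hs hst
    exact this (mem_Ioi.2 hs) (mem_Ioi.2 (lt_of_lt_of_le hs hst)) hst
  -- monotonicity of ψ(t) = (1 + e t)^2 - t^2 on (0,∞)
  have hψ' : ∀ x : ℝ, 0 < x →
      HasDerivAt (fun t => (1 + e t) ^ 2 - t ^ 2)
        (2 * (1 + e x) ^ 1 * deriv e x - 2 * x ^ 1) x := by
    intro x hx
    exact (((hdiff x hx).hasDerivAt.const_add 1).pow 2).sub (hasDerivAt_pow 2 x)
  have hψmono : ∀ s t : ℝ, 0 < s → s ≤ t →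
      (1 + e s) ^ 2 - s ^ 2 ≤ (1 + e t) ^ 2 - t ^ 2 := by
    have : MonotoneOn (fun t : ℝ => (1 + e t) ^ 2 - t ^ 2) (Ioi 0) := by
      apply monotoneOn_of_deriv_nonneg (convex_Ioi 0)
      · intro x hx
        exact ((hψ' x hx).differentiableAt.continuousAt).continuousWithinAt
      · intro x hx
        rw [interior_Ioi] at hx
        exact (hψ' x hx).differentiableAt.differentiableWithinAt
      · intro x hx
        rw [interior_Ioi] at hx
        rw [(hψ' x hx).deriv]
        have := hkey x hx
        nlinarith
    intro s t hs hst
    exact this (mem_Ioi.2 hs) (mem_Ioi.2 (lt_of_lt_of_le hs hst)) hst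
  -- R(θ) = θ and R is monotone
  have hRθ : R θ = θ := by
    rw [hRdef, hH]
    field_simp
    ring
  have hRmono : ∀ s t : ℝ, 0 < s → s ≤ t → R s ≤ R t := by
    intro s t hs hst
    simp only [hRdef]
    have h1 : 1 + s + e s ≤ 1 + t + e t := hmono s t hs hst
    have h2 : (0:ℝ) < 1 + s + e s := by linarith [hpos s hs]
    have h3 : (1 + s + e s) ^ 2 ≤ (1 + t + e t) ^ 2 := by nlinarith
    have h4 : (0:ℝ) < 2 * H := by linarith
    gcongr
  by_cases hRs : 0 < R θs
  swap
  · -- R θs ≤ 0: trivial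
    have h1 : R θs ≤ 0 := le_of_not_gt hRs
    have h2 : 0 < θs * Real.exp I := mul_pos hθs (Real.exp_pos _)
    calc θ - H / 2 + (1 + θs + e θs) ^ 2 / (2 * H) = R θs := by rw [hRdef]
      _ ≤ θs * Real.exp I := by linarith
  -- the main case
  · suffices hlog : Real.log (R θs) - Real.log θs ≤ I by
      calc θ - H / 2 + (1 + θs + e θs) ^ 2 / (2 * H) = R θs := by rw [hRdef]
        _ = Real.exp (Real.log (R θs)) := (Real.exp_log hRs).symm
        _ ≤ Real.exp (Real.log θs + I) := Real.exp_le_exp.2 (by linarith)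
        _ = θs * Real.exp I := by rw [Real.exp_add, Real.exp_log hθs]
    -- positivity of R and t on uIcc θ θs
    have hminpos : 0 < min θ θs := lt_min hθ hθs
    have hsub : uIcc θ θs ⊆ Ioi 0 := fun x hx => lt_of_lt_of_le hminpos hx.1
    have hRminpos : 0 < R (min θ θs) := by
      rcases min_cases θ θs with ⟨h1, _⟩ | ⟨h1, _⟩
      · rw [h1, hRθ]; exact hθ
      · rw [h1]; exact hRs
    have hRposI : ∀ t ∈ uIcc θ θs, 0 < R t := fun t ht =>
      lt_of_lt_of_le hRminpos (hRmono _ t hminpos ht.1)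
    -- the comparison function φ and its derivative φ'
    obtain ⟨φ, hφdef⟩ : ∃ φ : ℝ → ℝ,
        φ = fun t => Real.log (R t) - Real.log t := ⟨_, rfl⟩
    obtain ⟨φ', hφ'def⟩ : ∃ φ' : ℝ → ℝ,
        φ' = fun t => (1 + deriv e t) * (1 + t + e t) / (H * R t) - 1 / t := ⟨_, rfl⟩
    have hderivφ : ∀ t ∈ uIcc θ θs, HasDerivAt φ (φ' t) t := by
      intro t ht
      have ht0 : 0 < t := hsub ht
      have hRt : 0 < R t := hRposI t ht
      have h1 : HasDerivAt R
          (2 * (1 + t + e t) ^ 1 * (1 + deriv e t) / (2 * H)) t := by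
        rw [hRdef]
        exact (((hA' t ht0).pow 2).div_const (2 * H)).const_add (θ - H / 2)
      have h2 := (h1.log hRt.ne').sub (Real.hasDerivAt_log ht0.ne')
      rw [hφdef, hφ'def]
      refine h2.congr_deriv ?_
      field_simp
    -- integrability
    have hconte : ContinuousOn e (uIcc θ θs) := fun x hx =>
      ((hdiff x (hsub hx)).continuousAt).continuousWithinAt
    have hInte : IntervalIntegrable (deriv e) volume θ θs := by
      apply intervalIntegrable_deriv_of_nonneg
        (g := e) (fun x hx => (hconte x hx).mono (by simp))
      · intro x hx
        exact (hdiff x (lt_of_lt_of_le hminpos hx.1.le)).hasDerivAt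
      · intro x hx
        exact (hds x (lt_of_lt_of_le hminpos hx.1.le)).le
    have hcA : ContinuousOn (fun t : ℝ => 1 + t + e t) (uIcc θ θs) :=
      hcontA.mono hsub
    have hcR : ContinuousOn R (uIcc θ θs) := by
      rw [hRdef]
      exact continuousOn_const.add ((hcA.pow 2).div_const _)
    have hcInv : ContinuousOn (fun t : ℝ => 1 / t) (uIcc θ θs) :=
      continuousOn_const.div continuousOn_id (fun x hx => (hsub hx).ne')
    have hcg : ContinuousOn (fun t => (1 + t + e t) / (H * R t)) (uIcc θ θs) :=
      hcA.div (continuousOn_const.mul hcR)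
        (fun x hx => (mul_pos hh' (hRposI x hx)).ne')
    have hInt1 : IntervalIntegrable (fun ξ => deriv e ξ / ξ) volume θ θs := by
      have h3 := hInte.mul_continuousOn hcInv
      apply h3.congr
      intro x _
      ring
    have hInt2 : IntervalIntegrable φ' volume θ θs := by
      have h3 : IntervalIntegrable
          (fun t => deriv e t * ((1 + t + e t) / (H * R t))
            + ((1 + t + e t) / (H * R t) - 1 / t)) volume θ θs :=
        (hInte.mul_continuousOn hcg).add ((hcg.sub hcInv).intervalIntegrable)
      apply h3.congr
      intro x _
      rw [hφ'def]
      ring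
    -- FTC for φ
    have hFTC : ∫ t in θ..θs, φ' t = φ θs - φ θ :=
      integral_eq_sub_of_hasDerivAt hderivφ hInt2
    have hφθ : φ θ = 0 := by rw [hφdef]; simp [hRθ]
    -- H * R t without division
    have hHR : ∀ t : ℝ,
        H * R t = H * θ - H ^ 2 / 2 + (1 + t + e t) ^ 2 / 2 := by
      intro t
      rw [hRdef]
      field_simp
    rcases le_total θ θs with hab | hab
    · -- θ ≤ θs
      have hpw : ∀ t ∈ Icc θ θs, φ' t ≤ deriv e t / t := by
        intro t ht
        have ht0 : 0 < t := lt_of_lt_of_le hθ ht.1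
        have htI : t ∈ uIcc θ θs := by rw [uIcc_of_le hab]; exact ht
        have hRt : 0 < R t := hRposI t htI
        have hψ := hψmono θ t hθ ht.1
        have hAt : (0:ℝ) < 1 + t + e t := by linarith [hpos t ht0]
        have hd : 0 < deriv e t := hds t ht0
        have hHRt := hHR t
        have hclaim : (1 + deriv e t) * (1 + t + e t) / (H * R t)
            ≤ (1 + deriv e t) / t := by
          rw [div_le_div_iff₀ (mul_pos hh' hRt) ht0]
          have hAt2 : (1 + t + e t) * t ≤ H * R t := by
            rw [hHRt, hH]
            nlinarith
          nlinarith
        rw [hφ'def]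
        simp only
        have heq : deriv e t / t = (1 + deriv e t) / t - 1 / t := by
          field_simp
          ring
        rw [heq]
        linarith
      have hmono_int : ∫ t in θ..θs, φ' t ≤ ∫ ξ in θ..θs, deriv e ξ / ξ :=
        integral_mono_on hab hInt2 hInt1 hpw
      rw [hFTC, hφθ] at hmono_int
      rw [hφdef] at hmono_int
      simp only at hmono_int
      rw [hI]
      linarith
    · -- θs ≤ θ
      have hpw : ∀ t ∈ Icc θs θ, deriv e t / t ≤ φ' t := by
        intro t ht
        have ht0 : 0 < t := lt_of_lt_of_le hθs ht.1
        have htI : t ∈ uIcc θ θs := by rw [uIcc_of_ge hab]; exact ht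
        have hRt : 0 < R t := hRposI t htI
        have hψ := hψmono t θ ht0 ht.2
        have hAt : (0:ℝ) < 1 + t + e t := by linarith [hpos t ht0]
        have hd : 0 < deriv e t := hds t ht0
        have hHRt := hHR t
        have hclaim : (1 + deriv e t) / t
            ≤ (1 + deriv e t) * (1 + t + e t) / (H * R t) := by
          rw [div_le_div_iff₀ ht0 (mul_pos hh' hRt)]
          have hAt2 : H * R t ≤ (1 + t + e t) * t := by
            rw [hHRt, hH]
            nlinarith
          nlinarith
        rw [hφ'def]
        simp only
        have heq : deriv e t / t = (1 + deriv e t) / t - 1 / t := by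
          field_simp
          ring
        rw [heq]
        linarith
      have hmono_int : ∫ ξ in θs..θ, deriv e ξ / ξ ≤ ∫ t in θs..θ, φ' t :=
        integral_mono_on hab hInt1.symm hInt2.symm hpw
      have hFTC2 : ∫ t in θs..θ, φ' t = φ θ - φ θs :=
        integral_eq_sub_of_hasDerivAt (by rw [uIcc_comm]; exact hderivφ) hInt2.symm
      rw [hFTC2, hφθ] at hmono_int
      have hsymm : I = -∫ ξ in θs..θ, deriv e ξ / ξ := by
        rw [hI, integral_symm]
      rw [hsymm]
      rw [hφdef] at hmono_int
      simp only at hmono_int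
      linarith

/-- Let `e` be a Synge-type EOS. Then for all `θ, θ_* > 0` and every
`μ̃ ≥ 0`,
`(1 + θ + e(θ))·(μ̃² + 1)/2 − (1 + θ_* + e(θ_*))·μ̃ + θ_*·exp(∫_θ^{θ_*} e'(ξ)/ξ dξ) − θ ≥ 0`. -/
theorem minimum_entropy_stmt5 (e : ℝ → ℝ)
    (hdiff : ∀ ξ : ℝ, 0 < ξ → DifferentiableAt ℝ e ξ)
    (hpos : ∀ ξ : ℝ, 0 < ξ → 0 < e ξ)
    (hineq : ∀ ξ : ℝ, 0 < ξ → ξ / (e ξ + 1) < deriv e ξ)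
    (θ θs : ℝ) (hθ : 0 < θ) (hθs : 0 < θs)
    (μ : ℝ) (hμ : 0 ≤ μ) :
    0 ≤ (1 + θ + e θ) * ((μ ^ 2 + 1) / 2) - (1 + θs + e θs) * μ
        + θs * Real.exp (∫ ξ in θ..θs, deriv e ξ / ξ) - θ := by
  have hh : (0:ℝ) < 1 + θ + e θ := by linarith [hpos θ hθ]
  have key := synge_key e hdiff hpos hineq θ θs hθ hθs
  obtain ⟨E, hE⟩ : ∃ E : ℝ, E = Real.exp (∫ ξ in θ..θs, deriv e ξ / ξ) := ⟨_, rfl⟩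
  obtain ⟨H, hH⟩ : ∃ H : ℝ, H = 1 + θ + e θ := ⟨_, rfl⟩
  obtain ⟨Hs, hHs⟩ : ∃ Hs : ℝ, Hs = 1 + θs + e θs := ⟨_, rfl⟩
  rw [← hE, ← hH, ← hHs] at key ⊢
  rw [← hH] at hh
  have h2H : (0:ℝ) < 2 * H := by linarith
  have k2 : Hs ^ 2 / (2 * H) ≤ θs * E - θ + H / 2 := by linarith
  have key' : Hs ^ 2 ≤ (θs * E - θ + H / 2) * (2 * H) := (div_le_iff₀ h2H).mp k2
  nlinarith [sq_nonneg (H * μ - Hs), key', hh, mul_pos hh hh]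
end

section
/- Let e : (0,∞) → ℝ be a Synge-type EOS. Let d ≥ 1, θ, θ_* > 0, ε ∈ [−1,1], v, v_* ∈ ℝ^d with |v| < 1 and |v_*| < 1, and i ∈ {1,…,d}. Define μ = ((1 − v·v_*)/(1 − |v|²)) · ((1 + ε v_i)/(1 + ε v_{i,*})) and μ̃ = (√(1 − |v_*|²)/√(1 − |v|²)) · ((1 + ε v_i)/(1 + ε v_{i,*})). Then (1 + θ + e(θ))·μ − (1 + θ_* + e(θ_*))·μ̃ + θ_*·exp(∫_θ^{θ_*} e'(ξ)/ξ dξ) − θ ≥ 0. -/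
open scoped BigOperators

noncomputable section

/-- Comparison function `N(s) = θ + (h(s)² - h(θ)²)/(2 h(θ))` where `h(s) = 1+s+e(s)`. -/
def NN (e : ℝ → ℝ) (θ s : ℝ) : ℝ :=
  θ + ((1 + s + e s) ^ 2 - (1 + θ + e θ) ^ 2) / (2 * (1 + θ + e θ))

/-- Auxiliary quotient `h(s)/(h(θ) N(s))`. -/
def CC (e : ℝ → ℝ) (θ s : ℝ) : ℝ := (1 + s + e s) / ((1 + θ + e θ) * NN e θ s)

/-- Derivative of `s ↦ log (N s) - log s`. -/
def FF (e : ℝ → ℝ) (θ s : ℝ) : ℝ := (1 + deriv e s) * CC e θ s - 1 / s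

lemma key_integral (e : ℝ → ℝ)
    (hdiff : ∀ ξ : ℝ, 0 < ξ → DifferentiableAt ℝ e ξ)
    (hpos : ∀ ξ : ℝ, 0 < ξ → 0 < e ξ)
    (hineq : ∀ ξ : ℝ, 0 < ξ → ξ / (e ξ + 1) < deriv e ξ)
    (θ θs : ℝ) (hθ : 0 < θ) (hθs : 0 < θs) :
    θ + ((1 + θs + e θs) ^ 2 - (1 + θ + e θ) ^ 2) / (2 * (1 + θ + e θ))
      ≤ θs * Real.exp (∫ ξ in θ..θs, deriv e ξ / ξ) := by
  have epos : ∀ s : ℝ, 0 < s → 0 < deriv e s := fun s hs =>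
    lt_trans (div_pos hs (by linarith [hpos s hs])) (hineq s hs)
  have ederiv_big : ∀ s : ℝ, 0 < s → s < deriv e s * (e s + 1) := fun s hs =>
    (div_lt_iff₀ (by linarith [hpos s hs])).mp (hineq s hs)
  have Hpos : ∀ s : ℝ, 0 < s → 0 < 1 + s + e s := fun s hs => by linarith [hpos s hs]
  have hH0 : (0:ℝ) < 1 + θ + e θ := Hpos θ hθ
  have hHne : (1 + θ + e θ) ≠ 0 := ne_of_gt hH0
  show NN e θ θs ≤ θs * Real.exp (∫ ξ in θ..θs, deriv e ξ / ξ)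
  by_cases hc : 0 < NN e θ θs
  swap
  · exact le_trans (le_of_not_gt hc) (mul_pos hθs (Real.exp_pos _)).le
  have hmin : 0 < min θ θs := lt_min hθ hθs
  have hmem : ∀ s ∈ Set.uIcc θ θs, 0 < s := by
    intro s hs
    rw [Set.mem_uIcc] at hs
    rcases hs with h | h <;> linarith
  have econtIoi : ContinuousOn e (Set.Ioi (0:ℝ)) := fun x hx =>
    (hdiff x hx).continuousAt.continuousWithinAt
  have emono : MonotoneOn e (Set.Ioi (0:ℝ)) := by
    refine (strictMonoOn_of_deriv_pos (convex_Ioi 0) econtIoi ?_).monotoneOn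
    rw [interior_Ioi]; exact fun x hx => epos x hx
  have hH : ∀ s ∈ Set.Ioi (0:ℝ), HasDerivAt (fun t => 1 + t + e t) (1 + deriv e s) s :=
    fun s hs => ((hasDerivAt_id s).const_add (1:ℝ)).add (hdiff s hs).hasDerivAt
  have hNderiv : ∀ s ∈ Set.Ioi (0:ℝ),
      HasDerivAt (NN e θ) ((1 + s + e s) * (1 + deriv e s) / (1 + θ + e θ)) s := by
    intro s hs
    have h1 := ((((hH s hs).pow 2).sub_const ((1 + θ + e θ) ^ 2)).div_const
      (2 * (1 + θ + e θ))).const_add θ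
    have h2 : HasDerivAt (NN e θ)
        ((2:ℕ) * (1 + s + e s) ^ (2 - 1) * (1 + deriv e s) / (2 * (1 + θ + e θ))) s := h1
    convert h2 using 1
    field_simp
    ring
  have hNθ : NN e θ θ = θ := by
    unfold NN
    rw [sub_self, zero_div, add_zero]
  have hNpos : ∀ s ∈ Set.uIcc θ θs, 0 < NN e θ s := by
    intro s hs
    rcases le_total θ θs with hab | hab
    · rw [Set.uIcc_of_le hab] at hs
      have hs1 : θ ≤ s := hs.1
      have hs0 : 0 < s := lt_of_lt_of_le hθ hs1
      have h1 : e θ ≤ e s := emono hθ hs0 hs1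
      have hHs : 1 + θ + e θ ≤ 1 + s + e s := by linarith
      have h2 : 0 ≤ ((1 + s + e s) ^ 2 - (1 + θ + e θ) ^ 2) / (2 * (1 + θ + e θ)) :=
        div_nonneg (by nlinarith) (by linarith)
      show 0 < θ + ((1 + s + e s) ^ 2 - (1 + θ + e θ) ^ 2) / (2 * (1 + θ + e θ))
      linarith
    · rw [Set.uIcc_of_ge hab] at hs
      have hs1 : θs ≤ s := hs.1
      have hs0 : 0 < s := lt_of_lt_of_le hθs hs1
      have h1 : e θs ≤ e s := emono hθs hs0 hs1
      have hHs : 1 + θs + e θs ≤ 1 + s + e s := by linarith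
      have hHs0 : 0 < 1 + θs + e θs := Hpos θs hθs
      have h2 : 0 ≤ ((1 + s + e s) ^ 2 - (1 + θs + e θs) ^ 2) / (2 * (1 + θ + e θ)) :=
        div_nonneg (by nlinarith) (by linarith)
      have hEq : NN e θ s
          = NN e θ θs + ((1 + s + e s) ^ 2 - (1 + θs + e θs) ^ 2) / (2 * (1 + θ + e θ)) := by
        unfold NN; ring
      rw [hEq]; linarith
  -- monotonicity of W s = h(θ) N(s) - s h(s)
  have hWd : ∀ s ∈ Set.Ioi (0:ℝ),
      HasDerivAt (fun t => (1 + θ + e θ) * NN e θ t - t * (1 + t + e t))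
        ((1 + θ + e θ) * ((1 + s + e s) * (1 + deriv e s) / (1 + θ + e θ))
          - (1 * (1 + s + e s) + s * (1 + deriv e s))) s :=
    fun s hs => ((hNderiv s hs).const_mul _).sub ((hasDerivAt_id s).mul (hH s hs))
  have hWmono : MonotoneOn (fun t => (1 + θ + e θ) * NN e θ t - t * (1 + t + e t))
      (Set.Ioi (0:ℝ)) := by
    refine (strictMonoOn_of_deriv_pos (convex_Ioi 0)
      (fun x hx => (hWd x hx).continuousAt.continuousWithinAt) ?_).monotoneOn
    rw [interior_Ioi]
    intro x hx
    rw [(hWd x hx).deriv]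
    have hcan : (1 + θ + e θ) * ((1 + x + e x) * (1 + deriv e x) / (1 + θ + e θ))
        = (1 + x + e x) * (1 + deriv e x) := by
      rw [mul_comm ((1:ℝ) + θ + e θ), div_mul_cancel₀ _ hHne]
    rw [hcan]
    nlinarith [ederiv_big x hx, hpos x hx, epos x hx]
  have hWθ : (1 + θ + e θ) * NN e θ θ - θ * (1 + θ + e θ) = 0 := by
    rw [hNθ]; ring
  -- integrability
  have hcinv : ContinuousOn (fun s : ℝ => 1 / s) (Set.uIcc θ θs) :=
    continuousOn_const.div continuousOn_id fun x hx => ne_of_gt (hmem x hx)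
  have Ie : IntervalIntegrable (deriv e) MeasureTheory.volume θ θs := by
    apply intervalIntegral.intervalIntegrable_deriv_of_nonneg (g := e)
    · exact fun x hx => (hdiff x (hmem x hx)).continuousAt.continuousWithinAt
    · exact fun x hx => (hdiff x (lt_trans hmin hx.1)).hasDerivAt
    · exact fun x hx => (epos x (lt_trans hmin hx.1)).le
  have I1 : IntervalIntegrable (fun s => deriv e s / s) MeasureTheory.volume θ θs := by
    have heq : (fun s : ℝ => deriv e s / s) = fun s => deriv e s * (1 / s) := by
      funext s; rw [mul_one_div]
    rw [heq]
    exact Ie.mul_continuousOn hcinv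
  have hc1 : ContinuousOn (CC e θ) (Set.uIcc θ θs) := by
    unfold CC
    apply ContinuousOn.div
    · exact (continuousOn_const.add continuousOn_id).add
        (fun x hx => (hdiff x (hmem x hx)).continuousAt.continuousWithinAt)
    · exact continuousOn_const.mul
        (fun x hx => (hNderiv x (hmem x hx)).continuousAt.continuousWithinAt)
    · exact fun x hx => ne_of_gt (mul_pos hH0 (hNpos x hx))
  have IF : IntervalIntegrable (FF e θ) MeasureTheory.volume θ θs := by
    have heq : FF e θ = fun s => deriv e s * CC e θ s + (CC e θ s - 1 / s) := by
      funext s; unfold FF; ring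
    rw [heq]
    exact (Ie.mul_continuousOn hc1).add ((hc1.sub hcinv).intervalIntegrable)
  -- FTC for g = log (N s) - log s
  have hgderiv : ∀ s ∈ Set.uIcc θ θs,
      HasDerivAt (fun t => Real.log (NN e θ t) - Real.log t) (FF e θ s) s := by
    intro s hs
    have hs0 := hmem s hs
    have hNs := hNpos s hs
    have h1 : HasDerivAt (fun t => Real.log (NN e θ t))
        ((1 + s + e s) * (1 + deriv e s) / (1 + θ + e θ) / NN e θ s) s :=
      (hNderiv s hs0).log (ne_of_gt hNs)
    have h2 := h1.sub (Real.hasDerivAt_log (ne_of_gt hs0))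
    refine h2.congr_deriv (Eq.symm ?_)
    unfold FF CC
    rw [one_div]
    field_simp
    try ring
    try exact Or.inl trivial
  have hFTC : ∫ s in θ..θs, FF e θ s
      = (Real.log (NN e θ θs) - Real.log θs) - (Real.log (NN e θ θ) - Real.log θ) :=
    intervalIntegral.integral_eq_sub_of_hasDerivAt hgderiv IF
  -- pointwise comparison and integral monotonicity
  have hcmp : ∫ s in θ..θs, FF e θ s ≤ ∫ s in θ..θs, deriv e s / s := by
    rcases le_total θ θs with hab | hab
    · apply intervalIntegral.integral_mono_on hab IF I1
      intro s hs
      have hs1 : θ ≤ s := hs.1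
      have hs0 : 0 < s := lt_of_lt_of_le hθ hs1
      have hsu : s ∈ Set.uIcc θ θs := by rw [Set.uIcc_of_le hab]; exact hs
      have hNs : 0 < NN e θ s := hNpos s hsu
      have hW : 0 ≤ (1 + θ + e θ) * NN e θ s - s * (1 + s + e s) := by
        have h := hWmono hθ hs0 hs1
        simp only at h
        linarith [hWθ]
      have he' : 0 < deriv e s := epos s hs0
      have hHs : 0 < 1 + s + e s := Hpos s hs0
      have h2 : CC e θ s ≤ 1 / s := by
        unfold CC
        rw [div_le_div_iff₀ (mul_pos hH0 hNs) hs0]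
        linarith
      have h4 := mul_le_mul_of_nonneg_left h2 (by linarith : (0:ℝ) ≤ 1 + deriv e s)
      have h5 : (1 + deriv e s) * (1 / s) - 1 / s = deriv e s / s := by ring
      unfold FF
      linarith
    · have hpt : ∀ s ∈ Set.Icc θs θ, deriv e s / s ≤ FF e θ s := by
        intro s hs
        have hs1 : θs ≤ s := hs.1
        have hs0 : 0 < s := lt_of_lt_of_le hθs hs1
        have hsu : s ∈ Set.uIcc θ θs := by rw [Set.uIcc_of_ge hab]; exact hs
        have hNs : 0 < NN e θ s := hNpos s hsu
        have hW : (1 + θ + e θ) * NN e θ s - s * (1 + s + e s) ≤ 0 := by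
          have h := hWmono hs0 hθ hs.2
          simp only at h
          linarith [hWθ]
        have he' : 0 < deriv e s := epos s hs0
        have hHs : 0 < 1 + s + e s := Hpos s hs0
        have h2 : 1 / s ≤ CC e θ s := by
          unfold CC
          rw [div_le_div_iff₀ hs0 (mul_pos hH0 hNs)]
          linarith
        have h4 := mul_le_mul_of_nonneg_left h2 (by linarith : (0:ℝ) ≤ 1 + deriv e s)
        have h5 : (1 + deriv e s) * (1 / s) - 1 / s = deriv e s / s := by ring
        unfold FF
        linarith
      have hmono := intervalIntegral.integral_mono_on hab I1.symm IF.symm hpt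
      have e1 : ∫ s in θ..θs, FF e θ s = -∫ s in θs..θ, FF e θ s :=
        intervalIntegral.integral_symm θs θ
      have e2 : ∫ s in θ..θs, deriv e s / s = -∫ s in θs..θ, deriv e s / s :=
        intervalIntegral.integral_symm θs θ
      rw [e1, e2]
      linarith
  have h3 : Real.log (NN e θ θs) - Real.log θs ≤ ∫ ξ in θ..θs, deriv e ξ / ξ := by
    rw [hFTC, hNθ] at hcmp
    simp only [sub_self, sub_zero] at hcmp
    exact hcmp
  have h4 : NN e θ θs / θs ≤ Real.exp (∫ ξ in θ..θs, deriv e ξ / ξ) := by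
    have := Real.exp_le_exp.mpr h3
    rwa [Real.exp_sub, Real.exp_log hc, Real.exp_log hθs] at this
  calc NN e θ θs = NN e θ θs / θs * θs := by rw [div_mul_cancel₀ _ (ne_of_gt hθs)]
    _ ≤ Real.exp (∫ ξ in θ..θs, deriv e ξ / ξ) * θs :=
        mul_le_mul_of_nonneg_right h4 hθs.le
    _ = θs * Real.exp (∫ ξ in θ..θs, deriv e ξ / ξ) := mul_comm _ _

set_option maxHeartbeats 2000000 in
/-- key GQL inequality. Let `e` be a Synge-type EOS.
For all `θ, θ_* > 0`, `ε ∈ [−1,1]`, `v, v_*` in the open unit ball of `ℝ^d`, and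
`i ∈ {1,…,d}`, with `μ` and `μ̃` as in Statement 4,
`(1 + θ + e(θ))·μ − (1 + θ_* + e(θ_*))·μ̃ + θ_*·exp(∫_θ^{θ_*} e'(ξ)/ξ dξ) − θ ≥ 0`. -/
theorem minimum_entropy_stmt6 (e : ℝ → ℝ)
    (hdiff : ∀ ξ : ℝ, 0 < ξ → DifferentiableAt ℝ e ξ)
    (hpos : ∀ ξ : ℝ, 0 < ξ → 0 < e ξ)
    (hineq : ∀ ξ : ℝ, 0 < ξ → ξ / (e ξ + 1) < deriv e ξ)
    (d : ℕ) (hd : 1 ≤ d)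
    (θ θs : ℝ) (hθ : 0 < θ) (hθs : 0 < θs)
    (ε : ℝ) (hε : ε ∈ Set.Icc (-1 : ℝ) 1)
    (v vs : Fin d → ℝ) (hv : nrm v < 1) (hvs : nrm vs < 1)
    (i : Fin d) :
    0 ≤ (1 + θ + e θ) *
          (((1 - dotp v vs) / (1 - nsq v)) * ((1 + ε * v i) / (1 + ε * vs i)))
        - (1 + θs + e θs) *
          ((Real.sqrt (1 - nsq vs) / Real.sqrt (1 - nsq v)) *
            ((1 + ε * v i) / (1 + ε * vs i)))
        + θs * Real.exp (∫ ξ in θ..θs, deriv e ξ / ξ) - θ := by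
  have hnnv : 0 ≤ nsq v := Finset.sum_nonneg fun j _ => sq_nonneg _
  have hnnvs : 0 ≤ nsq vs := Finset.sum_nonneg fun j _ => sq_nonneg _
  have hv' : Real.sqrt (nsq v) < 1 := hv
  have hvs' : Real.sqrt (nsq vs) < 1 := hvs
  have hA : nsq v < 1 := by
    nlinarith [Real.sq_sqrt hnnv, Real.sqrt_nonneg (nsq v)]
  have hB : nsq vs < 1 := by
    nlinarith [Real.sq_sqrt hnnvs, Real.sqrt_nonneg (nsq vs)]
  have hvi : (v i) ^ 2 ≤ nsq v :=
    Finset.single_le_sum (f := fun j => (v j) ^ 2) (fun j _ => sq_nonneg _) (Finset.mem_univ i)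
  have hvsi : (vs i) ^ 2 ≤ nsq vs :=
    Finset.single_le_sum (f := fun j => (vs j) ^ 2) (fun j _ => sq_nonneg _) (Finset.mem_univ i)
  have hε1 : ε ^ 2 ≤ 1 := by nlinarith [hε.1, hε.2]
  have hP : 0 < 1 + ε * v i := by nlinarith [sq_nonneg (ε + v i)]
  have hQ : 0 < 1 + ε * vs i := by nlinarith [sq_nonneg (ε + vs i)]
  have hA' : 0 < 1 - nsq v := by linarith
  have hB' : 0 < 1 - nsq vs := by linarith
  -- the quadratic inequality: B P² + A Q² ≤ 2(1 - v·vs) P Q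
  have expand : ∑ j, ((1 + ε * v i) * vs j - (1 + ε * vs i) * v j) ^ 2
      = (1 + ε * v i) ^ 2 * nsq vs
        - 2 * (1 + ε * v i) * (1 + ε * vs i) * dotp v vs
        + (1 + ε * vs i) ^ 2 * nsq v := by
    unfold nsq dotp
    rw [Finset.mul_sum, Finset.mul_sum, Finset.mul_sum, ← Finset.sum_sub_distrib,
      ← Finset.sum_add_distrib]
    exact Finset.sum_congr rfl fun j _ => by ring
  have single : ((1 + ε * v i) * vs i - (1 + ε * vs i) * v i) ^ 2
      ≤ ∑ j, ((1 + ε * v i) * vs j - (1 + ε * vs i) * v j) ^ 2 :=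
    Finset.single_le_sum (f := fun j => ((1 + ε * v i) * vs j - (1 + ε * vs i) * v j) ^ 2)
      (fun j _ => sq_nonneg _) (Finset.mem_univ i)
  have h1 : (1 + ε * v i) * vs i - (1 + ε * vs i) * v i = vs i - v i := by ring
  rw [h1] at single
  have h2 : ε ^ 2 * (v i - vs i) ^ 2 ≤ (v i - vs i) ^ 2 := by
    nlinarith [sq_nonneg (v i - vs i)]
  have hD : (1 - nsq vs) * (1 + ε * v i) ^ 2 + (1 - nsq v) * (1 + ε * vs i) ^ 2
      ≤ 2 * (1 - dotp v vs) * (1 + ε * v i) * (1 + ε * vs i) := by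
    nlinarith [single, expand, h2]
  -- 2μ ≥ μ̃² + 1
  have hm2 : ((Real.sqrt (1 - nsq vs) / Real.sqrt (1 - nsq v)) *
        ((1 + ε * v i) / (1 + ε * vs i))) ^ 2
      = ((1 - nsq vs) * (1 + ε * v i) ^ 2) / ((1 - nsq v) * (1 + ε * vs i) ^ 2) := by
    rw [mul_pow, div_pow, div_pow, Real.sq_sqrt hB'.le, Real.sq_sqrt hA'.le,
      div_mul_div_comm]
  have hAne : (1 - nsq v) ≠ 0 := ne_of_gt hA'
  have hQne : (1 + ε * vs i) ≠ 0 := ne_of_gt hQ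
  have heq : 2 * (((1 - dotp v vs) / (1 - nsq v)) * ((1 + ε * v i) / (1 + ε * vs i)))
      - (((Real.sqrt (1 - nsq vs) / Real.sqrt (1 - nsq v)) *
          ((1 + ε * v i) / (1 + ε * vs i))) ^ 2 + 1)
      = (2 * (1 - dotp v vs) * (1 + ε * v i) * (1 + ε * vs i)
          - (1 - nsq vs) * (1 + ε * v i) ^ 2 - (1 - nsq v) * (1 + ε * vs i) ^ 2)
        / ((1 - nsq v) * (1 + ε * vs i) ^ 2) := by
    rw [hm2]
    field_simp
    ring
  have hnum : 0 ≤ 2 * (1 - dotp v vs) * (1 + ε * v i) * (1 + ε * vs i)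
      - (1 - nsq vs) * (1 + ε * v i) ^ 2 - (1 - nsq v) * (1 + ε * vs i) ^ 2 := by
    linarith [hD]
  have hfrac : 0 ≤ (2 * (1 - dotp v vs) * (1 + ε * v i) * (1 + ε * vs i)
      - (1 - nsq vs) * (1 + ε * v i) ^ 2 - (1 - nsq v) * (1 + ε * vs i) ^ 2)
      / ((1 - nsq v) * (1 + ε * vs i) ^ 2) :=
    div_nonneg hnum (by positivity)
  have h2μ : (((Real.sqrt (1 - nsq vs) / Real.sqrt (1 - nsq v)) *
        ((1 + ε * v i) / (1 + ε * vs i))) ^ 2 + 1)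
      ≤ 2 * (((1 - dotp v vs) / (1 - nsq v)) * ((1 + ε * v i) / (1 + ε * vs i))) := by
    have h := hfrac
    rw [← heq] at h
    linarith
  -- the scalar integral inequality
  have key := key_integral e hdiff hpos hineq θ θs hθ hθs
  have hHθ : (0:ℝ) < 1 + θ + e θ := by linarith [hpos θ hθ]
  have hHs : (0:ℝ) < 1 + θs + e θs := by linarith [hpos θs hθs]
  have key2 : (1 + θs + e θs) ^ 2 - (1 + θ + e θ) ^ 2
      ≤ (θs * Real.exp (∫ ξ in θ..θs, deriv e ξ / ξ) - θ) * (2 * (1 + θ + e θ)) := by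
    have key' : ((1 + θs + e θs) ^ 2 - (1 + θ + e θ) ^ 2) / (2 * (1 + θ + e θ))
        ≤ θs * Real.exp (∫ ξ in θ..θs, deriv e ξ / ξ) - θ := by linarith [key]
    exact (div_le_iff₀ (by linarith)).mp key'
  nlinarith [key2, sq_nonneg ((1 + θ + e θ) * ((Real.sqrt (1 - nsq vs) / Real.sqrt (1 - nsq v)) *
      ((1 + ε * v i) / (1 + ε * vs i))) - (1 + θs + e θs)),
    mul_nonneg (mul_nonneg hHθ.le hHθ.le)
      (by linarith [h2μ] : (0:ℝ) ≤ 2 * (((1 - dotp v vs) / (1 - nsq v)) *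
        ((1 + ε * v i) / (1 + ε * vs i)))
        - ((((Real.sqrt (1 - nsq vs) / Real.sqrt (1 - nsq v)) *
          ((1 + ε * v i) / (1 + ε * vs i))) ^ 2 + 1))),
    hHθ]
end
end

section
/- Let e : (0,∞) → ℝ be a Synge-type EOS, d ≥ 1, and σ ∈ ℝ. Let (ρ, v, θ) be a primitive state (ρ > 0, θ > 0, |v| < 1) with −ln ρ + Z(θ) ≥ σ, and set U = U(ρ,v,θ), F_i = F_i(ρ,v,θ). Then for every i ∈ {1,…,d}, every v_* ∈ ℝ^d with |v_*| < 1, and every θ_* > 0: F_i·n_* ≥ −(U·n_* + p_*) − v_{i,*}·p_* and −F_i·n_* ≥ −(U·n_* + p_*) + v_{i,*}·p_*, where n_* = n_*(v_*,θ_*) and p_* = p_*(θ_*). -/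
open scoped BigOperators

noncomputable section

/-- `Z(θ) = ∫₁^θ e'(ξ)/ξ dξ`. -/
def Zfun (e : ℝ → ℝ) (θ : ℝ) : ℝ := ∫ ξ in (1:ℝ)..θ, deriv e ξ / ξ

/-- Specific enthalpy `h(θ) = 1 + θ + e(θ)`. -/
def hfun (e : ℝ → ℝ) (θ : ℝ) : ℝ := 1 + θ + e θ

/-- Lorentz factor `γ = (1 − |v|²)^{−1/2}`. -/
def gam {d : ℕ} (v : Fin d → ℝ) : ℝ := 1 / Real.sqrt (1 - nsq v)

/-- Conservative vector `U(ρ,v,θ) = (ργ, ρh(θ)γ²v, ρh(θ)γ² − p)` with `p = ρθ`,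
viewed as an element of `ℝ × ℝ^d × ℝ ≃ ℝ^{d+2}`. -/
def Uvec (e : ℝ → ℝ) {d : ℕ} (ρ : ℝ) (v : Fin d → ℝ) (θ : ℝ) : ℝ × (Fin d → ℝ) × ℝ :=
  (ρ * gam v,
   fun j => ρ * hfun e θ * (gam v) ^ 2 * v j,
   ρ * hfun e θ * (gam v) ^ 2 - ρ * θ)

/-- Flux `F_i(ρ,v,θ) = (ργv_i, ρh(θ)γ²v_i v + p e_i, ρh(θ)γ²v_i)` with `p = ρθ`. -/
def Fvec (e : ℝ → ℝ) {d : ℕ} (i : Fin d) (ρ : ℝ) (v : Fin d → ℝ) (θ : ℝ) :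
    ℝ × (Fin d → ℝ) × ℝ :=
  (ρ * gam v * v i,
   fun j => ρ * hfun e θ * (gam v) ^ 2 * v i * v j + ρ * θ * (if j = i then 1 else 0),
   ρ * hfun e θ * (gam v) ^ 2 * v i)

/-- Euclidean inner product on `ℝ^{d+2} = ℝ × ℝ^d × ℝ`. -/
def dot3 {d : ℕ} (u w : ℝ × (Fin d → ℝ) × ℝ) : ℝ :=
  u.1 * w.1 + dotp u.2.1 w.2.1 + u.2.2 * w.2.2

/-- `ñ_*(v_*) = (−√(1−|v_*|²), −v_*, 1)`. -/
def ntil {d : ℕ} (vs : Fin d → ℝ) : ℝ × (Fin d → ℝ) × ℝ :=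
  (-Real.sqrt (1 - nsq vs), fun j => -vs j, 1)

/-- `n_*(v_*,θ_*) = (−h(θ_*)√(1−|v_*|²), −v_*, 1)`. -/
def nstar (e : ℝ → ℝ) {d : ℕ} (vs : Fin d → ℝ) (θs : ℝ) : ℝ × (Fin d → ℝ) × ℝ :=
  (-(hfun e θs) * Real.sqrt (1 - nsq vs), fun j => -vs j, 1)

/-- `p_*(θ_*) = θ_* exp(Z(θ_*) − σ)`. -/
def pstar (e : ℝ → ℝ) (σ θs : ℝ) : ℝ := θs * Real.exp (Zfun e θs - σ)

/-- The admissible set `Ω_σ ⊆ ℝ^{d+2}`. -/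
def OmegaSet (e : ℝ → ℝ) (d : ℕ) (σ : ℝ) : Set (ℝ × (Fin d → ℝ) × ℝ) :=
  { u | ∃ ρ θ : ℝ, ∃ v : Fin d → ℝ,
      0 < ρ ∧ 0 < θ ∧ nrm v < 1 ∧ σ ≤ -Real.log ρ + Zfun e θ ∧ u = Uvec e ρ v θ }

namespace MES

lemma nsq_nonneg {d : ℕ} (v : Fin d → ℝ) : 0 ≤ nsq v :=
  Finset.sum_nonneg fun _ _ => sq_nonneg _

lemma nsq_lt_one {d : ℕ} {v : Fin d → ℝ} (h : nrm v < 1) : nsq v < 1 := by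
  have h0 : 0 ≤ nsq v := nsq_nonneg v
  have h1 : nsq v = (nrm v) ^ 2 := (Real.sq_sqrt h0).symm
  rw [h1]
  exact pow_lt_one₀ (Real.sqrt_nonneg _) h (by norm_num)

lemma sq_le_nsq {d : ℕ} (v : Fin d → ℝ) (i : Fin d) : (v i) ^ 2 ≤ nsq v :=
  Finset.single_le_sum (fun j _ => sq_nonneg (v j)) (Finset.mem_univ i)

lemma dotp_comm {d : ℕ} (v w : Fin d → ℝ) : dotp v w = dotp w v :=
  Finset.sum_congr rfl fun j _ => mul_comm _ _

lemma nsq_comb {d : ℕ} (x y : ℝ) (p q : Fin d → ℝ) :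
    nsq (fun j => x * p j - y * q j)
      = x ^ 2 * nsq p - 2 * x * y * dotp p q + y ^ 2 * nsq q := by
  unfold nsq dotp
  rw [Finset.mul_sum, Finset.mul_sum, Finset.mul_sum, ← Finset.sum_sub_distrib,
    ← Finset.sum_add_distrib]
  exact Finset.sum_congr rfl fun j _ => by ring

lemma sqrt_pos_of_nsq {d : ℕ} {v : Fin d → ℝ} (h : nsq v < 1) :
    0 < Real.sqrt (1 - nsq v) := Real.sqrt_pos.mpr (by linarith)

lemma gam_pos {d : ℕ} {v : Fin d → ℝ} (h : nsq v < 1) : 0 < gam v :=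
  div_pos one_pos (sqrt_pos_of_nsq h)

lemma gam_sq {d : ℕ} {v : Fin d → ℝ} (h : nsq v < 1) : (gam v) ^ 2 * (1 - nsq v) = 1 := by
  unfold gam
  have h1 : (0:ℝ) < 1 - nsq v := by linarith
  rw [div_pow, one_pow, Real.sq_sqrt h1.le]
  field_simp

lemma one_add_pos {t ε : ℝ} (ht : t ^ 2 < 1) (hε : ε ^ 2 = 1) : 0 < 1 + ε * t := by
  nlinarith [sq_nonneg (1 + ε * t), sq_nonneg ε]

/-- The Minkowski constraint `a² + b² ≤ 2abm`. -/
lemma minkowski {d : ℕ} (v vs : Fin d → ℝ) (i : Fin d) {ε : ℝ} (hε : ε ^ 2 = 1)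
    (hv : nsq v < 1) (hvs : nsq vs < 1) :
    (gam v * (1 + ε * v i)) ^ 2 + (gam vs * (1 + ε * vs i)) ^ 2
      ≤ 2 * (gam v * (1 + ε * v i)) * (gam vs * (1 + ε * vs i))
        * (gam v * gam vs * (1 - dotp v vs)) := by
  set γ := gam v with hγdef
  set γs := gam vs with hγsdef
  set a := γ * (1 + ε * v i) with hadef
  set b := γs * (1 + ε * vs i) with hbdef
  have hγ : γ ^ 2 * (1 - nsq v) = 1 := gam_sq hv
  have hγs : γs ^ 2 * (1 - nsq vs) = 1 := gam_sq hvs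
  have hW := nsq_comb (a * γs) (b * γ) vs v
  have hWi := sq_le_nsq (fun j => (a * γs) * vs j - (b * γ) * v j) i
  rw [hW] at hWi
  have hid : a * γs - b * γ = (-ε) * ((a * γs) * vs i - (b * γ) * v i) := by
    rw [hadef, hbdef]; ring
  have hsq : (a * γs - b * γ) ^ 2 = ((a * γs) * vs i - (b * γ) * v i) ^ 2 := by
    rw [hid, mul_pow, neg_pow, hε]; ring
  have hcomm : dotp vs v = dotp v vs := dotp_comm vs v
  nlinarith [hWi, hsq, hγ, hγs]

/-- Scalar core inequality. -/
lemma core {h hs a b m δ : ℝ} (hh : 0 < h) (ha : 0 < a) (hb : 0 < b)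
    (hcon : a ^ 2 + b ^ 2 ≤ 2 * a * b * m) (hkey : hs ^ 2 ≤ h ^ 2 + 2 * h * δ) :
    0 ≤ h * a * m - hs * a + b * δ := by
  have h1 : 0 ≤ h * (h * a ^ 2 + h * b ^ 2 + 2 * b ^ 2 * δ - 2 * a * b * hs) := by
    nlinarith [sq_nonneg (h * a - hs * b), mul_le_mul_of_nonneg_left hkey (sq_nonneg b)]
  have h2 : 0 ≤ h * a ^ 2 + h * b ^ 2 + 2 * b ^ 2 * δ - 2 * a * b * hs :=
    nonneg_of_mul_nonneg_right h1 hh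
  have h3 : h * (a ^ 2 + b ^ 2) ≤ h * (2 * a * b * m) :=
    mul_le_mul_of_nonneg_left hcon hh.le
  have h4 : 0 ≤ 2 * b * (h * a * m - hs * a + b * δ) := by nlinarith
  nlinarith


open MeasureTheory intervalIntegral Set

variable {e : ℝ → ℝ}

lemma uIcc_pos {a b x : ℝ} (ha : 0 < a) (hb : 0 < b) (hx : x ∈ Set.uIcc a b) : 0 < x :=
  lt_of_lt_of_le (lt_min ha hb) hx.1

lemma derivE_pos (hpos : ∀ ξ : ℝ, 0 < ξ → 0 < e ξ)
    (hineq : ∀ ξ : ℝ, 0 < ξ → ξ / (e ξ + 1) < deriv e ξ) {ξ : ℝ} (hξ : 0 < ξ) :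
    0 < deriv e ξ :=
  lt_trans (div_pos hξ (by linarith [hpos ξ hξ])) (hineq ξ hξ)

lemma e_contOn (hdiff : ∀ ξ : ℝ, 0 < ξ → DifferentiableAt ℝ e ξ) {s : Set ℝ}
    (hs : ∀ x ∈ s, (0:ℝ) < x) : ContinuousOn e s := fun x hx =>
  ((hdiff x (hs x hx)).continuousAt).continuousWithinAt

lemma intInt_derivE (hdiff : ∀ ξ : ℝ, 0 < ξ → DifferentiableAt ℝ e ξ)
    (hpos : ∀ ξ : ℝ, 0 < ξ → 0 < e ξ)
    (hineq : ∀ ξ : ℝ, 0 < ξ → ξ / (e ξ + 1) < deriv e ξ)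
    {a b : ℝ} (ha : 0 < a) (hb : 0 < b) :
    IntervalIntegrable (deriv e) MeasureTheory.volume a b := by
  apply intervalIntegrable_deriv_of_nonneg (g := e)
  · exact e_contOn hdiff fun x hx => uIcc_pos ha hb hx
  · intro x hx
    exact (hdiff x (lt_of_lt_of_le (lt_min ha hb) hx.1.le)).hasDerivAt
  · intro x hx
    exact (derivE_pos hpos hineq (lt_of_lt_of_le (lt_min ha hb) hx.1.le)).le

lemma intInt_g (hdiff : ∀ ξ : ℝ, 0 < ξ → DifferentiableAt ℝ e ξ)
    (hpos : ∀ ξ : ℝ, 0 < ξ → 0 < e ξ)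
    (hineq : ∀ ξ : ℝ, 0 < ξ → ξ / (e ξ + 1) < deriv e ξ)
    {a b : ℝ} (ha : 0 < a) (hb : 0 < b) :
    IntervalIntegrable (fun ξ => deriv e ξ / ξ) MeasureTheory.volume a b := by
  have h1 := intInt_derivE hdiff hpos hineq ha hb
  have h2 : ContinuousOn (fun ξ : ℝ => ξ⁻¹) (Set.uIcc a b) := by
    apply ContinuousOn.inv₀ continuousOn_id
    intro x hx
    exact (uIcc_pos ha hb hx).ne'
  simpa [div_eq_mul_inv] using h1.mul_continuousOn h2

lemma Z_diff (hdiff : ∀ ξ : ℝ, 0 < ξ → DifferentiableAt ℝ e ξ)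
    (hpos : ∀ ξ : ℝ, 0 < ξ → 0 < e ξ)
    (hineq : ∀ ξ : ℝ, 0 < ξ → ξ / (e ξ + 1) < deriv e ξ)
    {t1 t2 : ℝ} (h1 : 0 < t1) (h2 : 0 < t2) :
    Zfun e t2 - Zfun e t1 = ∫ ξ in t1..t2, deriv e ξ / ξ := by
  have hA : IntervalIntegrable (fun ξ => deriv e ξ / ξ) MeasureTheory.volume 1 t1 :=
    intInt_g hdiff hpos hineq one_pos h1
  have hB : IntervalIntegrable (fun ξ => deriv e ξ / ξ) MeasureTheory.volume t1 t2 :=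
    intInt_g hdiff hpos hineq h1 h2
  have h3 := integral_add_adjacent_intervals hA hB
  unfold Zfun
  linarith [h3]

lemma hfun_pos (hpos : ∀ ξ : ℝ, 0 < ξ → 0 < e ξ) {t : ℝ} (ht : 0 < t) : 0 < hfun e t := by
  have := hpos t ht; unfold hfun; linarith

lemma hfun_hasDerivAt (hdiff : ∀ ξ : ℝ, 0 < ξ → DifferentiableAt ℝ e ξ) {x : ℝ} (hx : 0 < x) :
    HasDerivAt (hfun e) (1 + deriv e x) x := by
  have h1 : HasDerivAt (fun t : ℝ => 1 + t) 1 x := by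
    simpa using (hasDerivAt_id x).const_add 1
  exact h1.add (hdiff x hx).hasDerivAt

lemma e_mono (hdiff : ∀ ξ : ℝ, 0 < ξ → DifferentiableAt ℝ e ξ)
    (hpos : ∀ ξ : ℝ, 0 < ξ → 0 < e ξ)
    (hineq : ∀ ξ : ℝ, 0 < ξ → ξ / (e ξ + 1) < deriv e ξ) :
    StrictMonoOn e (Set.Ioi 0) := by
  apply strictMonoOn_of_deriv_pos (convex_Ioi 0)
  · exact e_contOn hdiff fun x hx => hx
  · intro x hx
    rw [interior_Ioi] at hx
    exact derivE_pos hpos hineq hx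

lemma hfun_mono (hdiff : ∀ ξ : ℝ, 0 < ξ → DifferentiableAt ℝ e ξ)
    (hpos : ∀ ξ : ℝ, 0 < ξ → 0 < e ξ)
    (hineq : ∀ ξ : ℝ, 0 < ξ → ξ / (e ξ + 1) < deriv e ξ)
    {t1 t2 : ℝ} (h1 : 0 < t1) (hle : t1 ≤ t2) : hfun e t1 ≤ hfun e t2 := by
  have := (e_mono hdiff hpos hineq).monotoneOn (Set.mem_Ioi.mpr h1)
    (Set.mem_Ioi.mpr (lt_of_lt_of_le h1 hle)) hle
  unfold hfun; linarith

lemma phi_mono (hdiff : ∀ ξ : ℝ, 0 < ξ → DifferentiableAt ℝ e ξ)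
    (hpos : ∀ ξ : ℝ, 0 < ξ → 0 < e ξ)
    (hineq : ∀ ξ : ℝ, 0 < ξ → ξ / (e ξ + 1) < deriv e ξ)
    {t1 t2 : ℝ} (h1 : 0 < t1) (hle : t1 ≤ t2) :
    (1 + e t1) ^ 2 - t1 ^ 2 ≤ (1 + e t2) ^ 2 - t2 ^ 2 := by
  have hmono : StrictMonoOn (fun t => (1 + e t) ^ 2 - t ^ 2) (Set.Ioi 0) := by
    apply strictMonoOn_of_deriv_pos (convex_Ioi 0)
    · apply ContinuousOn.sub
      · exact ((continuousOn_const.add (e_contOn hdiff fun x hx => hx)).pow 2)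
      · exact (continuousOn_id.pow 2)
    · intro x hx
      rw [interior_Ioi] at hx
      have hd : HasDerivAt (fun t => (1 + e t) ^ 2 - t ^ 2)
          (2 * (1 + e x) * deriv e x - 2 * x) x := by
        have h1 : HasDerivAt (fun t : ℝ => 1 + e t) (deriv e x) x :=
          ((hdiff x hx).hasDerivAt).const_add 1
        have h2 := h1.pow 2
        have h3 : HasDerivAt (fun t : ℝ => t ^ 2) (2 * x) x := by
          simpa using hasDerivAt_pow 2 x
        have h4 := h2.sub h3
        refine h4.congr_deriv ?_
        push_cast
        ring
      rw [hd.deriv]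
      have h5 := hineq x hx
      have h6 : 0 < e x + 1 := by linarith [hpos x hx]
      have h7 : x < deriv e x * (e x + 1) := (div_lt_iff₀ h6).mp h5
      nlinarith
  exact (hmono.monotoneOn (Set.mem_Ioi.mpr h1)
    (Set.mem_Ioi.mpr (lt_of_lt_of_le h1 hle))) hle


/-- The key scalar inequality `h(θs)² ≤ h(θ)² + 2h(θ)(θs e^{Z(θs)−Z(θ)} − θ)`. -/
lemma key (hdiff : ∀ ξ : ℝ, 0 < ξ → DifferentiableAt ℝ e ξ)
    (hpos : ∀ ξ : ℝ, 0 < ξ → 0 < e ξ)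
    (hineq : ∀ ξ : ℝ, 0 < ξ → ξ / (e ξ + 1) < deriv e ξ)
    {θ θs : ℝ} (hθ : 0 < θ) (hθs : 0 < θs) :
    (hfun e θs) ^ 2 ≤ (hfun e θ) ^ 2
      + 2 * (hfun e θ) * (θs * Real.exp (Zfun e θs - Zfun e θ) - θ) := by
  set h := hfun e θ with hh_def
  set hs := hfun e θs with hhs_def
  have hh : 0 < h := hfun_pos hpos hθ
  have hhs : 0 < hs := hfun_pos hpos hθs
  set D : ℝ → ℝ := fun ξ => (hfun e ξ) ^ 2 - h ^ 2 + 2 * h * θ with hD_def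
  by_cases hDs : D θs ≤ 0
  · have hex : 0 < θs * Real.exp (Zfun e θs - Zfun e θ) := by positivity
    have : hs ^ 2 - h ^ 2 + 2 * h * θ ≤ 0 := hDs
    nlinarith
  push_neg at hDs
  -- main claim : `G θs - G θ ≤ Zfun θs - Zfun θ` where `G ξ = log (D ξ) - log ξ`
  set G : ℝ → ℝ := fun ξ => Real.log (D ξ) - Real.log ξ with hG_def
  set G' : ℝ → ℝ := fun ξ => 2 * hfun e ξ * (1 + deriv e ξ) / D ξ - 1 / ξ with hG'_def
  have hDθ : D θ = 2 * h * θ := by simp [hD_def, hh_def]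
  have idq : ∀ t : ℝ, (hfun e t) ^ 2 - 2 * t * hfun e t = (1 + e t) ^ 2 - t ^ 2 := by
    intro t; unfold hfun; ring
  -- derivative of G
  have hGderiv : ∀ ξ : ℝ, 0 < ξ → 0 < D ξ → HasDerivAt G (G' ξ) ξ := by
    intro ξ hξ hDξ
    have hD1 : HasDerivAt D (2 * hfun e ξ * (1 + deriv e ξ)) ξ := by
      have h1 := (hfun_hasDerivAt hdiff hξ).pow 2
      have h2 : HasDerivAt (fun t => (hfun e t) ^ 2 - h ^ 2 + 2 * h * θ)
          ((2:ℕ) * (hfun e ξ) ^ 1 * (1 + deriv e ξ)) ξ := (h1.sub_const _).add_const _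
      convert h2 using 1
      push_cast; ring
    have h3 := hD1.log hDξ.ne'
    have h4 := Real.hasDerivAt_log hξ.ne'
    have h5 := h3.sub h4
    refine h5.congr_deriv ?_
    rw [hG'_def]
    simp [one_div]
  -- integrability of G'
  have hG'int : ∀ t1 t2 : ℝ, 0 < t1 → 0 < t2 → (∀ x ∈ Set.uIcc t1 t2, 0 < D x) →
      IntervalIntegrable G' MeasureTheory.volume t1 t2 := by
    intro t1 t2 h1 h2 hDpos
    have hhc : ContinuousOn (hfun e) (Set.uIcc t1 t2) := by
      have : ContinuousOn (fun x : ℝ => 1 + x + e x) (Set.uIcc t1 t2) :=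
        (continuousOn_const.add continuousOn_id).add
          (e_contOn hdiff fun y hy => uIcc_pos h1 h2 hy)
      exact this
    have hDc : ContinuousOn D (Set.uIcc t1 t2) :=
      ((hhc.pow 2).sub continuousOn_const).add continuousOn_const
    have hmc : ContinuousOn (fun ξ => 2 * hfun e ξ / D ξ) (Set.uIcc t1 t2) := by
      exact (continuousOn_const.mul hhc).div hDc fun x hx => (hDpos x hx).ne'
    have hpart1 : IntervalIntegrable (fun ξ => deriv e ξ * (2 * hfun e ξ / D ξ))
        MeasureTheory.volume t1 t2 :=
      (intInt_derivE hdiff hpos hineq h1 h2).mul_continuousOn hmc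
    have hpart2 : IntervalIntegrable (fun ξ => 2 * hfun e ξ / D ξ - 1 / ξ)
        MeasureTheory.volume t1 t2 := by
      apply ContinuousOn.intervalIntegrable
      apply hmc.sub
      exact continuousOn_const.div continuousOn_id fun x hx => (uIcc_pos h1 h2 hx).ne'
    have := hpart1.add hpart2
    have heq : G' = fun ξ => deriv e ξ * (2 * hfun e ξ / D ξ) + (2 * hfun e ξ / D ξ - 1 / ξ) := by
      funext ξ
      rw [hG'_def]
      ring
    rw [heq]
    exact this
  have hmain : G θs - G θ ≤ Zfun e θs - Zfun e θ := by
    rcases le_total θ θs with hle | hle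
    · -- θ ≤ θs
      have hDpos : ∀ x ∈ Set.uIcc θ θs, 0 < D x := by
        intro x hx
        rw [Set.uIcc_of_le hle] at hx
        have h1 : h ≤ hfun e x := hfun_mono hdiff hpos hineq hθ hx.1
        have : 0 < hfun e x := lt_of_lt_of_le hh h1
        simp only [hD_def]
        nlinarith
      have hftc := intervalIntegral.integral_eq_sub_of_hasDerivAt
        (f := G) (f' := G')
        (fun x hx => hGderiv x (uIcc_pos hθ hθs hx) (hDpos x hx))
        (hG'int θ θs hθ hθs hDpos)
      have hmono : ∀ x ∈ Set.Icc θ θs, G' x ≤ deriv e x / x := by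
        intro x hx
        have hx0 : 0 < x := lt_of_lt_of_le hθ hx.1
        have hDx : 0 < D x := hDpos x (by rw [Set.uIcc_of_le hle]; exact hx)
        have hφ := phi_mono hdiff hpos hineq hθ hx.1
        have h2 : 2 * x * hfun e x ≤ D x := by
          simp only [hD_def]
          have i1 := idq θ
          have i2 := idq x
          simp only [← hh_def] at i1
          linarith
        have he' : 0 < 1 + deriv e x := by
          linarith [derivE_pos hpos hineq hx0]
        have h6 : 2 * hfun e x * (1 + deriv e x) / D x ≤ (1 + deriv e x) / x := by
          rw [div_le_div_iff₀ hDx hx0]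
          have hp := mul_nonneg he'.le (sub_nonneg.mpr h2)
          nlinarith [hp]
        have h7 : (1 + deriv e x) / x - 1 / x = deriv e x / x := by
          field_simp
          ring
        simp only [hG'_def]
        linarith
      have hint := intervalIntegral.integral_mono_on hle
        (hG'int θ θs hθ hθs hDpos) (intInt_g hdiff hpos hineq hθ hθs) hmono
      rw [hftc] at hint
      rw [Z_diff hdiff hpos hineq hθ hθs]
      exact hint
    · -- θs ≤ θ
      have hDpos : ∀ x ∈ Set.uIcc θs θ, 0 < D x := by
        intro x hx
        rw [Set.uIcc_of_le hle] at hx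
        have h1 : hs ≤ hfun e x := hfun_mono hdiff hpos hineq hθs hx.1
        have : D θs ≤ D x := by
          simp only [hD_def, hhs_def] at *
          nlinarith
        linarith
      have hDpos' : ∀ x ∈ Set.uIcc θ θs, 0 < D x := by
        rw [Set.uIcc_comm]; exact hDpos
      have hftc := intervalIntegral.integral_eq_sub_of_hasDerivAt
        (f := G) (f' := G')
        (fun x hx => hGderiv x (uIcc_pos hθs hθ hx) (hDpos x hx))
        (hG'int θs θ hθs hθ hDpos)
      have hmono : ∀ x ∈ Set.Icc θs θ, deriv e x / x ≤ G' x := by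
        intro x hx
        have hx0 : 0 < x := lt_of_lt_of_le hθs hx.1
        have hDx : 0 < D x := hDpos x (by rw [Set.uIcc_of_le hle]; exact hx)
        have hφ := phi_mono hdiff hpos hineq hx0 hx.2
        have h2 : D x ≤ 2 * x * hfun e x := by
          simp only [hD_def]
          have i1 := idq θ
          have i2 := idq x
          simp only [← hh_def] at i1
          linarith
        have he' : 0 < 1 + deriv e x := by
          linarith [derivE_pos hpos hineq hx0]
        have h6 : (1 + deriv e x) / x ≤ 2 * hfun e x * (1 + deriv e x) / D x := by
          rw [div_le_div_iff₀ hx0 hDx]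
          have hp := mul_nonneg he'.le (sub_nonneg.mpr h2)
          nlinarith [hp]
        have h7 : (1 + deriv e x) / x - 1 / x = deriv e x / x := by
          field_simp
          ring
        simp only [hG'_def]
        linarith
      have hint := intervalIntegral.integral_mono_on hle
        (intInt_g hdiff hpos hineq hθs hθ) (hG'int θs θ hθs hθ hDpos) hmono
      rw [hftc] at hint
      have hz' : Zfun e θ - Zfun e θs = ∫ ξ in θs..θ, deriv e ξ / ξ :=
        Z_diff hdiff hpos hineq hθs hθ
      have hfin : Zfun e θ - Zfun e θs ≤ G θ - G θs := by
        rw [hz']; exact hint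
      linarith
  -- conclude
  have hDθs : 0 < D θs := hDs
  have hDθpos : (0:ℝ) < D θ := by rw [hDθ]; positivity
  have hG1 : Real.exp (G θs - G θ) = D θs * θ / (θs * D θ) := by
    simp only [hG_def]
    rw [show Real.log (D θs) - Real.log θs - (Real.log (D θ) - Real.log θ)
        = (Real.log (D θs) + Real.log θ) - (Real.log θs + Real.log (D θ)) by ring]
    rw [Real.exp_sub, Real.exp_add, Real.exp_add, Real.exp_log hDθs, Real.exp_log hθ,
      Real.exp_log hθs, Real.exp_log hDθpos]
  have hG3 : D θs ≤ 2 * h * θs * Real.exp (Zfun e θs - Zfun e θ) := by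
    have h2 := Real.exp_le_exp.mpr hmain
    rw [hG1, hDθ] at h2
    rw [div_le_iff₀ (by positivity)] at h2
    have h3 : D θs * θ ≤ (2 * h * θs * Real.exp (Zfun e θs - Zfun e θ)) * θ := by
      nlinarith [h2]
    exact le_of_mul_le_mul_right h3 hθ
  simp only [hD_def] at hG3
  simp only [hhs_def]
  have hexpand : h ^ 2 + 2 * h * (θs * Real.exp (Zfun e θs - Zfun e θ) - θ)
      = h ^ 2 + (2 * h * θs * Real.exp (Zfun e θs - Zfun e θ) - 2 * h * θ) := by ring
  rw [hexpand]
  linarith [hG3]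


lemma dotp_smul_neg {d : ℕ} (c : ℝ) (v w : Fin d → ℝ) :
    dotp (fun j => c * v j) (fun j => -w j) = -(c * dotp v w) := by
  simp only [dotp]
  calc (∑ j, (c * v j) * (-w j)) = ∑ j, -(c * (v j * w j)) :=
        Finset.sum_congr rfl fun j _ => by ring
    _ = -(∑ j, c * (v j * w j)) := Finset.sum_neg_distrib _
    _ = -(c * ∑ j, v j * w j) := by rw [Finset.mul_sum]

lemma dotp_flux {d : ℕ} (c p : ℝ) (v w : Fin d → ℝ) (i : Fin d) :
    dotp (fun j => c * v j + p * (if j = i then 1 else 0)) (fun j => -w j)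
      = -(c * dotp v w) - p * w i := by
  unfold dotp
  have hstep : ∀ j, (c * v j + p * (if j = i then 1 else 0)) * (-w j)
      = -(c * (v j * w j)) + (if j = i then -(p * w j) else 0) := by
    intro j
    by_cases hj : j = i <;> simp [hj] <;> ring
  rw [Finset.sum_congr rfl fun j _ => hstep j, Finset.sum_add_distrib,
    Finset.sum_ite_eq' Finset.univ i (fun j => -(p * w j))]
  have h2 : (∑ j, -(c * (v j * w j))) = -(c * ∑ j, v j * w j) := by
    rw [Finset.sum_neg_distrib, Finset.mul_sum]
  rw [h2]
  simp
  ring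

end MES

/-- Let `e` be a Synge-type EOS, `d ≥ 1`, `σ ∈ ℝ`, and `(ρ,v,θ)`
a primitive state with `−ln ρ + Z(θ) ≥ σ`; set `U = U(ρ,v,θ)`, `F_i = F_i(ρ,v,θ)`.
Then for every `i`, every `v_*` in the open unit ball, and every `θ_* > 0`:
`F_i·n_* ≥ −(U·n_* + p_*) − v_{i,*}·p_*` and `−F_i·n_* ≥ −(U·n_* + p_*) + v_{i,*}·p_*`. -/
theorem minimum_entropy_stmt11 (e : ℝ → ℝ)
    (hdiff : ∀ ξ : ℝ, 0 < ξ → DifferentiableAt ℝ e ξ)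
    (hpos : ∀ ξ : ℝ, 0 < ξ → 0 < e ξ)
    (hineq : ∀ ξ : ℝ, 0 < ξ → ξ / (e ξ + 1) < deriv e ξ)
    (d : ℕ) (hd : 1 ≤ d) (σ : ℝ)
    (ρ : ℝ) (v : Fin d → ℝ) (θ : ℝ)
    (hρ : 0 < ρ) (hθ : 0 < θ) (hv : nrm v < 1)
    (hS : σ ≤ -Real.log ρ + Zfun e θ)
    (i : Fin d) (vs : Fin d → ℝ) (hvs : nrm vs < 1) (θs : ℝ) (hθs : 0 < θs) :
    -(dot3 (Uvec e ρ v θ) (nstar e vs θs) + pstar e σ θs) - vs i * pstar e σ θs ≤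
        dot3 (Fvec e i ρ v θ) (nstar e vs θs) ∧
      -(dot3 (Uvec e ρ v θ) (nstar e vs θs) + pstar e σ θs) + vs i * pstar e σ θs ≤
        -dot3 (Fvec e i ρ v θ) (nstar e vs θs) := by

  classical
  have hv2 : nsq v < 1 := MES.nsq_lt_one hv
  have hvs2 : nsq vs < 1 := MES.nsq_lt_one hvs
  -- dot product computations
  have hUN : dot3 (Uvec e ρ v θ) (nstar e vs θs)
      = ρ * gam v * (-(hfun e θs) * Real.sqrt (1 - nsq vs))
        + (-(ρ * hfun e θ * gam v ^ 2 * dotp v vs))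
        + (ρ * hfun e θ * gam v ^ 2 - ρ * θ) := by
    simp only [dot3, Uvec, nstar]
    rw [MES.dotp_smul_neg (ρ * hfun e θ * gam v ^ 2) v vs]
    ring
  have hFN : dot3 (Fvec e i ρ v θ) (nstar e vs θs)
      = ρ * gam v * v i * (-(hfun e θs) * Real.sqrt (1 - nsq vs))
        + (-(ρ * hfun e θ * gam v ^ 2 * v i * dotp v vs) - ρ * θ * vs i)
        + ρ * hfun e θ * gam v ^ 2 * v i := by
    simp only [dot3, Fvec, nstar]
    rw [MES.dotp_flux (ρ * hfun e θ * gam v ^ 2 * v i) (ρ * θ) v vs i]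
    ring
  -- abbreviations
  set sq := Real.sqrt (1 - nsq vs) with hsq_def
  set γ := gam v with hγ_def
  set γs := gam vs with hγs_def
  set h := hfun e θ with hh_def
  set hs := hfun e θs with hhs_def
  set P := pstar e σ θs with hP_def
  set E := Real.exp (Zfun e θs - Zfun e θ) with hE_def
  have hsqpos : 0 < sq := MES.sqrt_pos_of_nsq hvs2
  have hγpos : 0 < γ := MES.gam_pos hv2
  have hγspos : 0 < γs := MES.gam_pos hvs2
  have hγs_sq : γs * sq = 1 := by
    rw [hγs_def, hsq_def]
    unfold gam
    field_simp
    exact div_self hsqpos.ne'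
  have hh : 0 < h := MES.hfun_pos hpos hθ
  have hhs : 0 < hs := MES.hfun_pos hpos hθs
  have hEpos : 0 < E := Real.exp_pos _
  have hPgeq : ρ * (θs * E) ≤ P := by
    rw [hP_def, hE_def]
    unfold pstar
    have h1 : Zfun e θs - Zfun e θ + Real.log ρ ≤ Zfun e θs - σ := by linarith
    have h2 := Real.exp_le_exp.mpr h1
    rw [Real.exp_add, Real.exp_log hρ] at h2
    calc ρ * (θs * Real.exp (Zfun e θs - Zfun e θ))
        = θs * (Real.exp (Zfun e θs - Zfun e θ) * ρ) := by ring
      _ ≤ θs * Real.exp (Zfun e θs - σ) := mul_le_mul_of_nonneg_left h2 hθs.le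
  -- the master inequality, for both signs at once
  have hmaster : ∀ ε : ℝ, ε ^ 2 = 1 →
      0 ≤ ε * dot3 (Fvec e i ρ v θ) (nstar e vs θs)
        + dot3 (Uvec e ρ v θ) (nstar e vs θs) + P + ε * vs i * P := by
    intro ε hε
    have hvi : (v i) ^ 2 < 1 := lt_of_le_of_lt (MES.sq_le_nsq v i) hv2
    have hvsi : (vs i) ^ 2 < 1 := lt_of_le_of_lt (MES.sq_le_nsq vs i) hvs2
    have hA : 0 < 1 + ε * v i := MES.one_add_pos hvi hε
    have hB : 0 < 1 + ε * vs i := MES.one_add_pos hvsi hε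
    have hapos : 0 < γ * (1 + ε * v i) := mul_pos hγpos hA
    have hbpos : 0 < γs * (1 + ε * vs i) := mul_pos hγspos hB
    have hcon := MES.minkowski v vs i hε hv2 hvs2
    rw [← hγ_def, ← hγs_def] at hcon
    have hkey : hs ^ 2 ≤ h ^ 2 + 2 * h * (θs * E - θ) := by
      rw [hh_def, hhs_def, hE_def]
      exact MES.key hdiff hpos hineq hθ hθs
    have hcore : 0 ≤ h * (γ * (1 + ε * v i)) * (γ * γs * (1 - dotp v vs))
        - hs * (γ * (1 + ε * v i)) + (γs * (1 + ε * vs i)) * (θs * E - θ) :=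
      MES.core hh hapos hbpos hcon hkey
    have hid : ε * dot3 (Fvec e i ρ v θ) (nstar e vs θs)
        + dot3 (Uvec e ρ v θ) (nstar e vs θs) + P + ε * vs i * P
        = ρ * sq * (h * (γ * (1 + ε * v i)) * (γ * γs * (1 - dotp v vs))
            - hs * (γ * (1 + ε * v i)) + (γs * (1 + ε * vs i)) * (θs * E - θ))
          + (1 + ε * vs i) * (P - ρ * (θs * E)) := by
      rw [hUN, hFN]
      linear_combination (-(ρ * h * γ ^ 2 * (1 + ε * v i) * (1 - dotp v vs))
        - ρ * (θs * E - θ) * (1 + ε * vs i)) * hγs_sq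
    rw [hid]
    have t1 : 0 ≤ ρ * sq * (h * (γ * (1 + ε * v i)) * (γ * γs * (1 - dotp v vs))
        - hs * (γ * (1 + ε * v i)) + (γs * (1 + ε * vs i)) * (θs * E - θ)) :=
      mul_nonneg (by positivity) hcore
    have t2 : 0 ≤ (1 + ε * vs i) * (P - ρ * (θs * E)) :=
      mul_nonneg hB.le (by linarith)
    linarith
  constructor
  · have hm := hmaster 1 (by norm_num)
    linarith
  · have hm := hmaster (-1) (by norm_num)
    linarith
end
end

section
/- Let e : (0,∞) → ℝ be a Synge-type EOS, d ≥ 1, and let Q ∈ ℝ^{d×d} be an orthogonal matrix. Then for every primitive state (ρ, v, θ) (ρ > 0, θ > 0, |v| < 1) and every i ∈ {1,…,d}, with ξ = Q⁻¹e_i ∈ ℝ^d and Q̃ = diag(1, Q, 1) ∈ ℝ^{(d+2)×(d+2)}, one has Σ_{k=1}^d ξ_k·F_k(ρ,v,θ) = Q̃⁻¹·F_i(ρ, Qv, θ). Moreover U(ρ, Qv, θ) = Q̃·U(ρ,v,θ). -/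
open scoped BigOperators

noncomputable section

/-! The flux in a direction `ξ` is `Σ_k ξ_k F_k = (ργ (ξ⬝v), ρhγ² (ξ⬝v) v + p ξ, ρhγ² (ξ⬝v))`.
An orthogonal `Q` preserves `|v|`, hence `γ`; and for `ξ = Qᵀ e_i` one has `ξ⬝v = (Qv)_i` and
`Qᵀ (Qv) = v`, which turns `Qᵀ F_i(ρ, Qv, θ)` into exactly this expression. -/

open Matrix

section DotProduct

variable {R ι : Type*} [CommSemiring R] [Fintype ι]

theorem sum_mul_mul_eq_mul_dotProduct (ξ v : ι → R) (a : R) :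
    ∑ k, ξ k * (a * v k) = a * (ξ ⬝ᵥ v) := by
  simp only [dotProduct, Finset.mul_sum]
  exact Finset.sum_congr rfl fun k _ => by ring

theorem sum_smul_add_smul_single [DecidableEq ι] (ξ v : ι → R) (a p : R) :
    ∑ k, ξ k • ((a * v k) • v + p • (Pi.single k 1 : ι → R)) = (a * (ξ ⬝ᵥ v)) • v + p • ξ := by
  simp only [smul_add, Finset.sum_add_distrib, smul_smul, ← Finset.sum_smul]
  congr 1
  · rw [← sum_mul_mul_eq_mul_dotProduct]
  · ext j
    simp [Finset.sum_apply, Pi.single_apply, mul_comm]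

end DotProduct

theorem nsq_eq_dotProduct {d : ℕ} (v : Fin d → ℝ) : nsq v = v ⬝ᵥ v := by
  simp only [nsq, dotProduct, sq]

section Orthogonal

variable {d : ℕ} {Q : Matrix (Fin d) (Fin d) ℝ}

theorem transpose_mulVec_mulVec (hQ : Qᵀ * Q = 1) (v : Fin d → ℝ) : Qᵀ *ᵥ (Q *ᵥ v) = v := by
  rw [mulVec_mulVec, hQ, one_mulVec]

theorem nsq_mulVec (hQ : Qᵀ * Q = 1) (v : Fin d → ℝ) : nsq (Q *ᵥ v) = nsq v := by
  rw [nsq_eq_dotProduct, nsq_eq_dotProduct, dotProduct_mulVec, ← mulVec_transpose,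
    transpose_mulVec_mulVec hQ]

theorem gam_mulVec (hQ : Qᵀ * Q = 1) (v : Fin d → ℝ) : gam (Q *ᵥ v) = gam v := by
  rw [gam, gam, nsq_mulVec hQ]

theorem Uvec_mulVec (hQ : Qᵀ * Q = 1) (e : ℝ → ℝ) (ρ : ℝ) (v : Fin d → ℝ) (θ : ℝ) :
    Uvec e ρ (Q *ᵥ v) θ = ((Uvec e ρ v θ).1, Q *ᵥ (Uvec e ρ v θ).2.1, (Uvec e ρ v θ).2.2) := by
  have hmid : (fun j => ρ * hfun e θ * gam v ^ 2 * v j) = (ρ * hfun e θ * gam v ^ 2) • v := rfl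
  simp only [Uvec, gam_mulVec hQ, hmid, mulVec_smul]
  rfl

end Orthogonal

section Flux

variable (e : ℝ → ℝ) {d : ℕ} (ρ : ℝ) (v : Fin d → ℝ) (θ : ℝ)

theorem Fvec_eq (i : Fin d) :
    Fvec e i ρ v θ =
      (ρ * gam v * v i,
       (ρ * hfun e θ * gam v ^ 2 * v i) • v + (ρ * θ) • Pi.single i 1,
       ρ * hfun e θ * gam v ^ 2 * v i) := by
  ext j <;> simp [Fvec, Pi.single_apply, mul_assoc]

theorem sum_smul_Fvec (ξ : Fin d → ℝ) :
    ∑ k, ξ k • Fvec e k ρ v θ =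
      (ρ * gam v * (ξ ⬝ᵥ v),
       (ρ * hfun e θ * gam v ^ 2 * (ξ ⬝ᵥ v)) • v + (ρ * θ) • ξ,
       ρ * hfun e θ * gam v ^ 2 * (ξ ⬝ᵥ v)) := by
  simp only [Fvec_eq]
  refine Prod.ext ?_ (Prod.ext ?_ ?_) <;>
    simp only [Prod.fst_sum, Prod.snd_sum, Prod.smul_fst, Prod.smul_snd, smul_eq_mul,
      sum_mul_mul_eq_mul_dotProduct, sum_smul_add_smul_single]

end Flux

theorem minimum_entropy_stmt14_general (e : ℝ → ℝ)
    (d : ℕ)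
    (Q : Matrix (Fin d) (Fin d) ℝ) (hQ : Q.transpose * Q = 1)
    (ρ : ℝ) (v : Fin d → ℝ) (θ : ℝ)
    (i : Fin d) :
    (∑ k, (Q⁻¹.mulVec (Pi.single i 1)) k • Fvec e k ρ v θ) =
        ((Fvec e i ρ (Q.mulVec v) θ).1,
         Q⁻¹.mulVec (Fvec e i ρ (Q.mulVec v) θ).2.1,
         (Fvec e i ρ (Q.mulVec v) θ).2.2) ∧
      Uvec e ρ (Q.mulVec v) θ =
        ((Uvec e ρ v θ).1, Q.mulVec (Uvec e ρ v θ).2.1, (Uvec e ρ v θ).2.2) := by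
  refine ⟨?_, Uvec_mulVec hQ e ρ v θ⟩
  rw [inv_eq_left_inv hQ]
  have hξv : (Qᵀ *ᵥ Pi.single i 1) ⬝ᵥ v = (Q *ᵥ v) i := by
    rw [← vecMul_transpose, ← dotProduct_mulVec, transpose_transpose,
      single_one_dotProduct]
  rw [sum_smul_Fvec, Fvec_eq, gam_mulVec hQ, hξv, mulVec_add, mulVec_smul,
    mulVec_smul, transpose_mulVec_mulVec hQ]

/-- rotational invariance. Let `e` be a Synge-type EOS, `d ≥ 1`,
and `Q ∈ ℝ^{d×d}` orthogonal. For every primitive state `(ρ,v,θ)` and every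
`i ∈ {1,…,d}`, with `ξ = Q⁻¹e_i` and `Q̃ = diag(1,Q,1)`, one has
`Σ_k ξ_k F_k(ρ,v,θ) = Q̃⁻¹ F_i(ρ,Qv,θ)`; moreover `U(ρ,Qv,θ) = Q̃ U(ρ,v,θ)`. -/
theorem minimum_entropy_stmt14 (e : ℝ → ℝ)
    (hdiff : ∀ ξ : ℝ, 0 < ξ → DifferentiableAt ℝ e ξ)
    (hpos : ∀ ξ : ℝ, 0 < ξ → 0 < e ξ)
    (hineq : ∀ ξ : ℝ, 0 < ξ → ξ / (e ξ + 1) < deriv e ξ)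
    (d : ℕ) (hd : 1 ≤ d)
    (Q : Matrix (Fin d) (Fin d) ℝ) (hQ : Q.transpose * Q = 1)
    (ρ : ℝ) (v : Fin d → ℝ) (θ : ℝ)
    (hρ : 0 < ρ) (hθ : 0 < θ) (hv : nrm v < 1)
    (i : Fin d) :
    (∑ k, (Q⁻¹.mulVec (Pi.single i 1)) k • Fvec e k ρ v θ) =
        ((Fvec e i ρ (Q.mulVec v) θ).1,
         Q⁻¹.mulVec (Fvec e i ρ (Q.mulVec v) θ).2.1,
         (Fvec e i ρ (Q.mulVec v) θ).2.2) ∧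
      Uvec e ρ (Q.mulVec v) θ =
        ((Uvec e ρ v θ).1, Q.mulVec (Uvec e ρ v θ).2.1, (Uvec e ρ v θ).2.2) :=
  minimum_entropy_stmt14_general e d Q hQ ρ v θ i
end
end

section
/- Let e : (0,∞) → ℝ be a Synge-type EOS, d ≥ 1, and σ ∈ ℝ. Let (ρ, v, θ) be a primitive state (ρ > 0, θ > 0, |v| < 1) with −ln ρ + Z(θ) ≥ σ; set U = U(ρ,v,θ) and F_i = F_i(ρ,v,θ). Then for every unit vector ξ ∈ ℝ^d, every v_* ∈ ℝ^d with |v_*| < 1, and every θ_* > 0: (Σ_{i=1}^d ξ_i F_i)·n_* ≥ −(U·n_* + p_*) − (ξ·v_*)·p_*, where n_* = n_*(v_*,θ_*) and p_* = p_*(θ_*). -/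
open scoped BigOperators

noncomputable section

section Aux
open MeasureTheory intervalIntegral Set

variable (e : ℝ → ℝ)
variable (hdiff : ∀ ξ : ℝ, 0 < ξ → DifferentiableAt ℝ e ξ)
variable (hpos : ∀ ξ : ℝ, 0 < ξ → 0 < e ξ)
variable (hineq : ∀ ξ : ℝ, 0 < ξ → ξ / (e ξ + 1) < deriv e ξ)

include hdiff hpos hineq

omit hdiff hineq in
lemma hfun_pos : ∀ t : ℝ, 0 < t → 0 < hfun e t := by
  intro t ht; have := hpos t ht; simp only [hfun]; linarith

omit hdiff in
lemma deriv_e_pos : ∀ t : ℝ, 0 < t → 0 < deriv e t := by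
  intro t ht
  have h1 := hineq t ht
  have h2 : 0 < e t + 1 := by have := hpos t ht; linarith
  have : 0 < t / (e t + 1) := div_pos ht h2
  linarith

omit hpos hineq in
lemma e_contOn {s : Set ℝ} (hs : s ⊆ Set.Ioi 0) : ContinuousOn e s := fun x hx =>
  ((hdiff x (hs hx)).continuousAt).continuousWithinAt

lemma int_e' (u w : ℝ) (hu : 0 < u) (hw : 0 < w) :
    IntervalIntegrable (deriv e) volume u w := by
  have hm : 0 < min u w := lt_min hu hw
  apply intervalIntegrable_deriv_of_nonneg (g := e)
  · apply e_contOn e hdiff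
    intro x hx
    exact lt_of_lt_of_le hm (by simpa [Set.uIcc] using hx.1)
  · intro x hx
    exact (hdiff x (hm.trans hx.1)).hasDerivAt
  · intro x hx
    exact (deriv_e_pos e hpos hineq x (hm.trans hx.1)).le

lemma int_e'_div (u w : ℝ) (hu : 0 < u) (hw : 0 < w) :
    IntervalIntegrable (fun t => deriv e t / t) volume u w := by
  have hm : 0 < min u w := lt_min hu hw
  rw [intervalIntegrable_iff]
  have hbase : IntegrableOn (fun t => deriv e t / min u w) (Set.uIoc u w) volume := by
    rw [← intervalIntegrable_iff]
    exact (int_e' e hdiff hpos hineq u w hu hw).div_const _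
  apply hbase.mono'
  · exact ((measurable_deriv e).div measurable_id).aestronglyMeasurable
  · rw [ae_restrict_iff' measurableSet_uIoc]
    filter_upwards with t ht
    have htm : min u w < t := ht.1
    have ht0 : 0 < t := hm.trans htm
    have hd : 0 ≤ deriv e t := (deriv_e_pos e hpos hineq t ht0).le
    rw [Real.norm_eq_abs, abs_of_nonneg (div_nonneg hd ht0.le)]
    exact div_le_div_of_nonneg_left hd hm htm.le

lemma Zdiff (x y : ℝ) (hx : 0 < x) (hy : 0 < y) :
    Zfun e y - Zfun e x = ∫ t in x..y, deriv e t / t :=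
  intervalIntegral.integral_interval_sub_left
    (int_e'_div e hdiff hpos hineq 1 y one_pos hy)
    (int_e'_div e hdiff hpos hineq 1 x one_pos hx)

omit hpos hineq in
lemma hfun_hasDeriv (t : ℝ) (ht : 0 < t) :
    HasDerivAt (hfun e) (1 + deriv e t) t := by
  have h1 : HasDerivAt (fun s : ℝ => 1 + s) 1 t := (hasDerivAt_id t).const_add 1
  exact h1.add (hdiff t ht).hasDerivAt

lemma hfun_mono : StrictMonoOn (hfun e) (Set.Ioi 0) := by
  apply strictMonoOn_of_deriv_pos (convex_Ioi 0)
  · intro x hx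
    exact ((hfun_hasDeriv e hdiff x hx).differentiableAt.continuousAt).continuousWithinAt
  · intro x hx
    rw [interior_Ioi] at hx
    rw [(hfun_hasDeriv e hdiff x hx).deriv]
    have := deriv_e_pos e hpos hineq x hx
    linarith

omit hpos hineq in
lemma Jfun_hasDeriv (t : ℝ) (ht : 0 < t) :
    HasDerivAt (fun s => (1 + e s) ^ 2 - s ^ 2) (2 * (1 + e t) * deriv e t - 2 * t) t := by
  have h1 : HasDerivAt (fun s : ℝ => (1 + e s) ^ 2) (2 * (1 + e t) * deriv e t) t := by
    have := ((hdiff t ht).hasDerivAt.const_add 1).pow 2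
    exact this.congr_deriv (by norm_num <;> ring)
  exact (h1.sub (hasDerivAt_pow 2 t)).congr_deriv (by norm_num)

lemma Jfun_mono : StrictMonoOn (fun s => (1 + e s) ^ 2 - s ^ 2) (Set.Ioi 0) := by
  apply strictMonoOn_of_deriv_pos (convex_Ioi 0)
  · intro x hx
    exact ((Jfun_hasDeriv e hdiff x hx).differentiableAt.continuousAt).continuousWithinAt
  · intro x hx
    rw [interior_Ioi] at hx
    rw [(Jfun_hasDeriv e hdiff x hx).deriv]
    have h1 := hineq x hx
    have h2 : 0 < e x + 1 := by have := hpos x hx; linarith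
    have h3 : x < deriv e x * (e x + 1) := by
      rw [div_lt_iff₀ h2] at h1; linarith
    nlinarith

set_option maxHeartbeats 1600000 in
lemma claimS (θ θs : ℝ) (hθ : 0 < θ) (hθs : 0 < θs) :
    hfun e θs ^ 2 ≤ (1 + e θ) ^ 2 - θ ^ 2
      + 2 * hfun e θ * (θs * Real.exp (Zfun e θs - Zfun e θ)) := by
  have hh := hfun_pos e hpos θ hθ
  have hhs := hfun_pos e hpos θs hθs
  set C : ℝ := (1 + e θ) ^ 2 - θ ^ 2 with hC
  set R : ℝ → ℝ := fun t => hfun e t ^ 2 - C with hRdef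
  have hRθ : R θ = 2 * θ * hfun e θ := by simp only [hRdef, hC, hfun]; ring
  have hexp : 0 < θs * Real.exp (Zfun e θs - Zfun e θ) := by positivity
  by_cases hRs : R θs ≤ 0
  · simp only [hRdef] at hRs; nlinarith
  push_neg at hRs
  -- positivity of R on uIcc θ θs
  have hm : 0 < min θ θs := lt_min hθ hθs
  have hMpos : 0 < max θ θs := lt_of_lt_of_le hm (min_le_max)
  have hRmono : ∀ x y : ℝ, 0 < x → 0 < y → x ≤ y → R x ≤ R y := by
    intro x y hx hy hxy
    have h1 : hfun e x ≤ hfun e y :=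
      (hfun_mono e hdiff hpos hineq).monotoneOn hx hy hxy
    have h2 := hfun_pos e hpos x hx
    simp only [hRdef]; nlinarith
  have hRm : 0 < R (min θ θs) := by
    rcases min_cases θ θs with ⟨h1, _⟩ | ⟨h1, _⟩ <;> rw [h1]
    · rw [hRθ]; positivity
    · exact hRs
  have hRpos : ∀ t ∈ Set.uIcc θ θs, 0 < R t := by
    intro t ht
    rw [Set.uIcc] at ht
    have ht0 : 0 < t := lt_of_lt_of_le hm ht.1
    exact lt_of_lt_of_le hRm (hRmono _ _ hm ht0 ht.1)
  -- derivative of R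
  have hRderiv : ∀ t : ℝ, 0 < t → HasDerivAt R (2 * hfun e t * (1 + deriv e t)) t := by
    intro t ht
    have := ((hfun_hasDeriv e hdiff t ht).pow 2).sub_const C
    exact this.congr_deriv (by norm_num <;> ring)
  -- the comparison function F and its derivative F'
  set F : ℝ → ℝ := fun t => Real.log (R t) - Real.log t with hFdef
  set F' : ℝ → ℝ := fun t => 2 * hfun e t * (1 + deriv e t) / R t - t⁻¹ with hF'def
  have hF : ∀ t ∈ Set.uIcc θ θs, HasDerivAt F (F' t) t := by
    intro t ht
    have ht0 : 0 < t := lt_of_lt_of_le hm (by rw [Set.uIcc] at ht; exact ht.1)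
    have h1 : HasDerivAt (fun s => Real.log (R s))
        (2 * hfun e t * (1 + deriv e t) / R t) t :=
      (hRderiv t ht0).log (ne_of_gt (hRpos t ht))
    exact h1.sub (Real.hasDerivAt_log (ne_of_gt ht0))
  -- interval integrability of F'
  have hFint : IntervalIntegrable F' volume θ θs := by
    have hWgrp : IntervalIntegrable (fun t => 2 * hfun e t * (1 + deriv e t) / R t)
        volume θ θs := by
      rw [intervalIntegrable_iff]
      set c : ℝ := 2 * hfun e (max θ θs) / R (min θ θs) with hc
      have hbase : IntegrableOn (fun t => c * (1 + deriv e t)) (Set.uIoc θ θs) volume := by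
        rw [← intervalIntegrable_iff]
        exact ((intervalIntegrable_const (c := (1:ℝ))).add
          (int_e' e hdiff hpos hineq θ θs hθ hθs)).const_mul c
      apply hbase.mono'
      · have hcont1 : ContinuousOn (fun t => 2 * hfun e t / R t) (Set.uIoc θ θs) := by
          apply ContinuousOn.div
          · apply ContinuousOn.mul continuousOn_const
            intro x hx
            have hx0 : 0 < x := lt_of_lt_of_le hm (le_of_lt hx.1)
            exact ((hfun_hasDeriv e hdiff x hx0).differentiableAt.continuousAt).continuousWithinAt
          · intro x hx
            have hx0 : 0 < x := lt_of_lt_of_le hm (le_of_lt hx.1)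
            exact ((hRderiv x hx0).differentiableAt.continuousAt).continuousWithinAt
          · intro x hx
            exact ne_of_gt (hRpos x (Set.uIoc_subset_uIcc hx))
        have ham := (hcont1.aestronglyMeasurable measurableSet_uIoc).mul
          (((measurable_deriv e).const_add 1).aestronglyMeasurable
            (μ := volume.restrict (Set.uIoc θ θs)))
        apply ham.congr
        filter_upwards with t
        simp only [Pi.mul_apply]
        rw [div_mul_eq_mul_div]
      · rw [ae_restrict_iff' measurableSet_uIoc]
        filter_upwards with t ht
        have ht0 : 0 < t := lt_of_lt_of_le hm (le_of_lt ht.1)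
        have hRt : 0 < R t := hRpos t (Set.uIoc_subset_uIcc ht)
        have he' : 0 < 1 + deriv e t := by
          have := deriv_e_pos e hpos hineq t ht0; linarith
        have hht : 0 < hfun e t := hfun_pos e hpos t ht0
        have hhM : hfun e t ≤ hfun e (max θ θs) := by
          apply (hfun_mono e hdiff hpos hineq).monotoneOn ht0 hMpos
          rw [Set.uIoc] at ht; exact ht.2
        have hRmt : R (min θ θs) ≤ R t :=
          hRmono _ _ hm ht0 (le_of_lt ht.1)
        rw [Real.norm_eq_abs, abs_of_nonneg (by positivity)]
        have hfrac : 2 * hfun e t / R t ≤ 2 * hfun e (max θ θs) / R (min θ θs) :=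
          div_le_div₀ (by have := hfun_pos e hpos (max θ θs) hMpos; linarith)
            (by linarith) hRm hRmt
        calc 2 * hfun e t * (1 + deriv e t) / R t
            = (2 * hfun e t / R t) * (1 + deriv e t) := by ring
          _ ≤ (2 * hfun e (max θ θs) / R (min θ θs)) * (1 + deriv e t) :=
              mul_le_mul_of_nonneg_right hfrac he'.le
          _ = c * (1 + deriv e t) := by rw [hc]
    exact hWgrp.sub ((ContinuousOn.intervalIntegrable (by
      intro x hx
      have hx0 : 0 < x := lt_of_lt_of_le hm (by rw [Set.uIcc] at hx; exact hx.1)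
      exact (continuousAt_inv₀ (ne_of_gt hx0)).continuousWithinAt)))
  have hFTC : ∫ t in θ..θs, F' t = F θs - F θ :=
    integral_eq_sub_of_hasDerivAt hF hFint
  -- pointwise sign identity
  have hptid : ∀ t : ℝ, 0 < t → 0 < R t →
      deriv e t / t - F' t = (1 + deriv e t) * ((R t - 2 * hfun e t * t) / (R t * t)) := by
    intro t ht0 hRt
    simp only [hF'def]
    field_simp
    ring
  -- key inequality: F θs - F θ ≤ Z θs - Z θ
  have hkey : F θs - F θ ≤ Zfun e θs - Zfun e θ := by
    rcases le_total θ θs with hle | hle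
    · rw [Zdiff e hdiff hpos hineq θ θs hθ hθs, ← hFTC]
      apply intervalIntegral.integral_mono_on hle hFint
        (int_e'_div e hdiff hpos hineq θ θs hθ hθs)
      intro t ht
      have ht0 : 0 < t := lt_of_lt_of_le hθ ht.1
      have htI : t ∈ Set.uIcc θ θs := by
        rw [Set.uIcc_of_le hle]; exact ht
      have hRt : 0 < R t := hRpos t htI
      have he' : 0 < 1 + deriv e t := by
        have := deriv_e_pos e hpos hineq t ht0; linarith
      have hJ : (1 + e θ) ^ 2 - θ ^ 2 ≤ (1 + e t) ^ 2 - t ^ 2 :=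
        (Jfun_mono e hdiff hpos hineq).monotoneOn hθ ht0 ht.1
      have hR2 : 0 ≤ R t - 2 * hfun e t * t := by
        simp only [hRdef, hC, hfun]; nlinarith
      have hid := hptid t ht0 hRt
      have hprod : 0 ≤ (1 + deriv e t) * ((R t - 2 * hfun e t * t) / (R t * t)) :=
        mul_nonneg he'.le (div_nonneg hR2 (by positivity : (0:ℝ) ≤ R t * t))
      linarith
    · have hZ : Zfun e θs - Zfun e θ = -∫ t in θs..θ, deriv e t / t := by
        rw [← Zdiff e hdiff hpos hineq θs θ hθs hθ]; ring
      have hFTC2 : ∫ t in θs..θ, F' t = F θ - F θs := by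
        apply integral_eq_sub_of_hasDerivAt
        · intro t ht; exact hF t (by rwa [Set.uIcc_comm])
        · exact hFint.symm
      have hmain : (∫ t in θs..θ, deriv e t / t) ≤ ∫ t in θs..θ, F' t := by
        apply intervalIntegral.integral_mono_on hle
          (int_e'_div e hdiff hpos hineq θs θ hθs hθ) hFint.symm
        intro t ht
        have ht0 : 0 < t := lt_of_lt_of_le hθs ht.1
        have htI : t ∈ Set.uIcc θ θs := by
          rw [Set.uIcc_comm, Set.uIcc_of_le hle]; exact ht
        have hRt : 0 < R t := hRpos t htI
        have he' : 0 < 1 + deriv e t := by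
          have := deriv_e_pos e hpos hineq t ht0; linarith
        have hJ : (1 + e t) ^ 2 - t ^ 2 ≤ (1 + e θ) ^ 2 - θ ^ 2 :=
          (Jfun_mono e hdiff hpos hineq).monotoneOn ht0 hθ ht.2
        have hR2 : R t - 2 * hfun e t * t ≤ 0 := by
          simp only [hRdef, hC, hfun]; nlinarith
        have hid := hptid t ht0 hRt
        have hprod : (1 + deriv e t) * ((R t - 2 * hfun e t * t) / (R t * t)) ≤ 0 :=
          mul_nonpos_of_nonneg_of_nonpos he'.le
            (div_nonpos_of_nonpos_of_nonneg hR2 (by positivity : (0:ℝ) ≤ R t * t))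
        linarith
      have hfe : F θs - F θ = -(∫ t in θs..θ, F' t) := by rw [hFTC2]; ring
      rw [hZ, hfe]
      exact neg_le_neg hmain
  -- exponentiate
  have hexpkey : R θs / (θs * (2 * hfun e θ)) ≤ Real.exp (Zfun e θs - Zfun e θ) := by
    have h1 : Real.exp (F θs - F θ) ≤ Real.exp (Zfun e θs - Zfun e θ) :=
      Real.exp_le_exp.mpr hkey
    have h2 : Real.exp (F θs - F θ) = R θs / (θs * (2 * hfun e θ)) := by
      simp only [hFdef]
      rw [show Real.log (R θs) - Real.log θs - (Real.log (R θ) - Real.log θ)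
          = (Real.log (R θs) - Real.log θs) - (Real.log (R θ) - Real.log θ) by ring]
      rw [Real.exp_sub, Real.exp_sub, Real.exp_sub, Real.exp_log hRs, Real.exp_log hθs,
        Real.exp_log (by rw [hRθ]; positivity), Real.exp_log hθ, hRθ]
      field_simp
    linarith
  rw [div_le_iff₀ (by positivity)] at hexpkey
  have : R θs ≤ 2 * hfun e θ * (θs * Real.exp (Zfun e θs - Zfun e θ)) := by
    nlinarith [hexpkey]
  simp only [hRdef, hC] at this
  linarith


end Aux

-- dot products: basic lemmas
open MeasureTheory intervalIntegral Set in
lemma nrm_lt_one_iff {d : ℕ} (v : Fin d → ℝ) : nrm v < 1 ↔ nsq v < 1 := by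
  have h0 : 0 ≤ nsq v := Finset.sum_nonneg fun i _ => sq_nonneg _
  rw [nrm]
  constructor
  · intro h
    have := (Real.sqrt_lt' one_pos).mp h
    simpa using this
  · intro h
    apply (Real.sqrt_lt' one_pos).mpr
    simpa using h

lemma nsq_nonneg {d : ℕ} (v : Fin d → ℝ) : 0 ≤ nsq v :=
  Finset.sum_nonneg fun i _ => sq_nonneg _

lemma cauchy_schwarz {d : ℕ} (v w : Fin d → ℝ) : (dotp v w) ^ 2 ≤ nsq v * nsq w := by
  simpa [dotp, nsq] using Finset.sum_mul_sq_le_sq_mul_sq Finset.univ v w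

lemma dot3_add_left {d : ℕ} (u u' n : ℝ × (Fin d → ℝ) × ℝ) :
    dot3 (u + u') n = dot3 u n + dot3 u' n := by
  simp only [dot3, Prod.fst_add, Prod.snd_add, dotp, Pi.add_apply, add_mul,
    Finset.sum_add_distrib]
  ring

lemma dot3_smul_left {d : ℕ} (c : ℝ) (u n : ℝ × (Fin d → ℝ) × ℝ) :
    dot3 (c • u) n = c * dot3 u n := by
  simp only [dot3, Prod.smul_fst, Prod.smul_snd, dotp, Pi.smul_apply, smul_eq_mul,
    mul_add, Finset.mul_sum]
  have : ∑ j, c * u.2.1 j * n.2.1 j = ∑ j, c * (u.2.1 j * n.2.1 j) :=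
    Finset.sum_congr rfl fun j _ => by ring
  rw [this]
  ring

lemma dot3_sum_left {d : ℕ} {ι : Type*} (s : Finset ι) (f : ι → ℝ × (Fin d → ℝ) × ℝ)
    (n : ℝ × (Fin d → ℝ) × ℝ) :
    dot3 (∑ i ∈ s, f i) n = ∑ i ∈ s, dot3 (f i) n := by
  classical
  induction s using Finset.induction_on with
  | empty => simp [dot3, dotp]
  | insert _ _ h ih => rw [Finset.sum_insert h, Finset.sum_insert h, dot3_add_left, ih]

lemma dot3_dotsum {d : ℕ} (e : ℝ → ℝ) (ρ θ θs : ℝ) (v vs ξ : Fin d → ℝ) :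
    dot3 (∑ i, ξ i • Fvec e i ρ v θ) (nstar e vs θs)
      = dotp ξ v * (ρ * gam v * (-(hfun e θs) * Real.sqrt (1 - nsq vs))
          - ρ * hfun e θ * (gam v) ^ 2 * dotp v vs + ρ * hfun e θ * (gam v) ^ 2)
        - dotp ξ vs * (ρ * θ) := by
  have hcomp : ∀ i : Fin d, dot3 (Fvec e i ρ v θ) (nstar e vs θs)
      = v i * (ρ * gam v * (-(hfun e θs) * Real.sqrt (1 - nsq vs))
          - ρ * hfun e θ * (gam v) ^ 2 * dotp v vs + ρ * hfun e θ * (gam v) ^ 2)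
        - vs i * (ρ * θ) := by
    intro i
    simp only [dot3, Fvec, nstar, dotp]
    have hterm : ∀ j : Fin d, (ρ * hfun e θ * gam v ^ 2 * v i * v j
          + ρ * θ * (if j = i then 1 else 0)) * -vs j
        = -(ρ * hfun e θ * gam v ^ 2 * v i) * (v j * vs j)
          + (if j = i then -(ρ * θ) * vs j else 0) := by
      intro j; by_cases h : j = i <;> simp [h] <;> ring
    rw [Finset.sum_congr rfl fun j _ => hterm j, Finset.sum_add_distrib,
      Finset.sum_ite_eq' Finset.univ i fun j => -(ρ * θ) * vs j, ← Finset.mul_sum]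
    simp [dotp]
    ring
  rw [dot3_sum_left]
  set K : ℝ := ρ * gam v * (-(hfun e θs) * Real.sqrt (1 - nsq vs))
      - ρ * hfun e θ * (gam v) ^ 2 * dotp v vs + ρ * hfun e θ * (gam v) ^ 2 with hK
  calc ∑ i, dot3 (ξ i • Fvec e i ρ v θ) (nstar e vs θs)
      = ∑ i, (ξ i * v i * K - ξ i * vs i * (ρ * θ)) := by
        apply Finset.sum_congr rfl
        intro i _
        rw [dot3_smul_left, hcomp i]
        ring
    _ = (∑ i, ξ i * v i) * K - (∑ i, ξ i * vs i) * (ρ * θ) := by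
        rw [Finset.sum_sub_distrib, ← Finset.sum_mul, ← Finset.sum_mul]
    _ = dotp ξ v * K - dotp ξ vs * (ρ * θ) := rfl

lemma dot3_U {d : ℕ} (e : ℝ → ℝ) (ρ θ θs : ℝ) (v vs : Fin d → ℝ) :
    dot3 (Uvec e ρ v θ) (nstar e vs θs)
      = (ρ * gam v * (-(hfun e θs) * Real.sqrt (1 - nsq vs))
          - ρ * hfun e θ * (gam v) ^ 2 * dotp v vs + ρ * hfun e θ * (gam v) ^ 2)
        - ρ * θ := by
  simp only [dot3, Uvec, nstar, dotp]
  have hmid : ∑ j, (ρ * hfun e θ * gam v ^ 2 * v j) * (-vs j)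
      = -(ρ * hfun e θ * gam v ^ 2 * ∑ j, v j * vs j) := by
    rw [Finset.mul_sum, ← Finset.sum_neg_distrib]
    exact Finset.sum_congr rfl fun j _ => by ring
  rw [hmid]
  ring

set_option maxHeartbeats 1600000 in
/-- Let `e` be a Synge-type EOS, `d ≥ 1`, `σ ∈ ℝ`, and `(ρ,v,θ)`
an admissible primitive state with `−ln ρ + Z(θ) ≥ σ`. Then for every unit vector
`ξ ∈ ℝ^d`, every `v_*` in the open unit ball, and every `θ_* > 0`:
`(Σ_i ξ_i F_i)·n_* ≥ −(U·n_* + p_*) − (ξ·v_*)·p_*`. -/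
theorem minimum_entropy_stmt15 (e : ℝ → ℝ)
    (hdiff : ∀ ξ : ℝ, 0 < ξ → DifferentiableAt ℝ e ξ)
    (hpos : ∀ ξ : ℝ, 0 < ξ → 0 < e ξ)
    (hineq : ∀ ξ : ℝ, 0 < ξ → ξ / (e ξ + 1) < deriv e ξ)
    (d : ℕ) (hd : 1 ≤ d) (σ : ℝ)
    (ρ : ℝ) (v : Fin d → ℝ) (θ : ℝ)
    (hρ : 0 < ρ) (hθ : 0 < θ) (hv : nrm v < 1)
    (hS : σ ≤ -Real.log ρ + Zfun e θ)
    (ξ : Fin d → ℝ) (hξ : nrm ξ = 1)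
    (vs : Fin d → ℝ) (hvs : nrm vs < 1) (θs : ℝ) (hθs : 0 < θs) :
    -(dot3 (Uvec e ρ v θ) (nstar e vs θs) + pstar e σ θs) - dotp ξ vs * pstar e σ θs ≤
      dot3 (∑ i, ξ i • Fvec e i ρ v θ) (nstar e vs θs) := by
  have hP : nsq v < 1 := (nrm_lt_one_iff v).mp hv
  have hP0 : 0 ≤ nsq v := nsq_nonneg v
  have hQ : nsq vs < 1 := (nrm_lt_one_iff vs).mp hvs
  have hQ0 : 0 ≤ nsq vs := nsq_nonneg vs
  have hξ1 : nsq ξ = 1 := by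
    have h0 : 0 ≤ nsq ξ := nsq_nonneg ξ
    have h1 : Real.sqrt (nsq ξ) = 1 := hξ
    nlinarith [Real.sq_sqrt h0, h1]
  rw [dot3_dotsum, dot3_U]
  set a : ℝ := dotp ξ v with hadef
  set b : ℝ := dotp ξ vs with hbdef
  set c : ℝ := dotp v vs with hcdef
  set A1 : ℝ := Real.sqrt (1 - nsq v) with hA1def
  set A2 : ℝ := Real.sqrt (1 - nsq vs) with hA2def
  have hA1 : 0 < A1 := Real.sqrt_pos.mpr (by linarith)
  have hA2 : 0 < A2 := Real.sqrt_pos.mpr (by linarith)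
  have hA1sq : A1 ^ 2 = 1 - nsq v := Real.sq_sqrt (by linarith)
  have hA2sq : A2 ^ 2 = 1 - nsq vs := Real.sq_sqrt (by linarith)
  have hgam : gam v = 1 / A1 := rfl
  have ha2 : a ^ 2 ≤ nsq v := by
    have := cauchy_schwarz ξ v; rwa [hξ1, one_mul] at this
  have hb2 : b ^ 2 ≤ nsq vs := by
    have := cauchy_schwarz ξ vs; rwa [hξ1, one_mul] at this
  have ha1 : 0 < 1 + a := by nlinarith
  have hb1 : 0 < 1 + b := by nlinarith
  -- geometric Cauchy-Schwarz inequality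
  have hGdiff : 0 ≤ 2 * (1 + a) * (1 + b) * (1 - c)
      - (1 + a) ^ 2 * (1 - nsq vs) - (1 + b) ^ 2 * (1 - nsq v) := by
    have hW := cauchy_schwarz ξ (fun j => (1 + a) * vs j - (1 + b) * v j)
    rw [hξ1, one_mul] at hW
    have h1 : dotp ξ (fun j => (1 + a) * vs j - (1 + b) * v j)
        = (1 + a) * b - (1 + b) * a := by
      simp only [dotp]
      have hterm : ∀ j, ξ j * ((1 + a) * vs j - (1 + b) * v j)
          = (1 + a) * (ξ j * vs j) - (1 + b) * (ξ j * v j) := fun j => by ring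
      rw [Finset.sum_congr rfl fun j _ => hterm j, Finset.sum_sub_distrib,
        ← Finset.mul_sum, ← Finset.mul_sum]
      rw [hadef, hbdef]; rfl
    have h2 : nsq (fun j => (1 + a) * vs j - (1 + b) * v j)
        = (1 + a) ^ 2 * nsq vs - 2 * (1 + a) * (1 + b) * c + (1 + b) ^ 2 * nsq v := by
      simp only [nsq]
      have hterm : ∀ j, ((1 + a) * vs j - (1 + b) * v j) ^ 2
          = (1 + a) ^ 2 * (vs j) ^ 2
            - 2 * (1 + a) * (1 + b) * (v j * vs j) + (1 + b) ^ 2 * (v j) ^ 2 :=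
        fun j => by ring
      rw [Finset.sum_congr rfl fun j _ => hterm j, Finset.sum_add_distrib,
        Finset.sum_sub_distrib, ← Finset.mul_sum, ← Finset.mul_sum, ← Finset.mul_sum]
      rw [hcdef]; rfl
    rw [h1, h2] at hW
    nlinarith [hW]
  -- EOS facts
  have hh : 0 < hfun e θ := hfun_pos e hpos θ hθ
  have hhs : 0 < hfun e θs := hfun_pos e hpos θs hθs
  set k : ℝ := θs * Real.exp (Zfun e θs - Zfun e θ) with hkdef
  have hk0 : 0 < k := by positivity
  have hs2 := claimS e hdiff hpos hineq θ θs hθ hθs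
  have hSgap : 0 ≤ hfun e θ ^ 2 - 2 * hfun e θ * θ + 2 * hfun e θ * k - hfun e θs ^ 2 := by
    have hid : hfun e θ ^ 2 - 2 * hfun e θ * θ = (1 + e θ) ^ 2 - θ ^ 2 := by
      simp only [hfun]; ring
    rw [← hkdef] at hs2
    linarith
  -- pstar lower bound
  have hps : ρ * k ≤ pstar e σ θs := by
    rw [pstar, hkdef]
    have h1 : Zfun e θs - Zfun e θ + Real.log ρ ≤ Zfun e θs - σ := by linarith
    calc ρ * (θs * Real.exp (Zfun e θs - Zfun e θ))
        = θs * Real.exp (Zfun e θs - Zfun e θ + Real.log ρ) := by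
          rw [Real.exp_add, Real.exp_log hρ]; ring
      _ ≤ θs * Real.exp (Zfun e θs - σ) :=
          mul_le_mul_of_nonneg_left (Real.exp_le_exp.mpr h1) hθs.le
  -- quadratic nonnegativity
  have hX : 0 ≤ hfun e θ * (1 + a) ^ 2 * A2 ^ 2
      - 2 * hfun e θs * (1 + a) * (1 + b) * (A1 * A2)
      + (1 + b) ^ 2 * A1 ^ 2 * (hfun e θ + 2 * k - 2 * θ) := by
    nlinarith [sq_nonneg (hfun e θ * (1 + a) * A2 - hfun e θs * (1 + b) * A1),
      mul_nonneg (mul_nonneg (sq_nonneg (1 + b)) (sq_nonneg A1)) hSgap, hh,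
      mul_pos hh hh]
  -- the T inequality
  have hT : 0 ≤ (1 + a) * (hfun e θ * (1 - c)) - (1 + a) * (hfun e θs * (A1 * A2))
      + A1 ^ 2 * ((1 + b) * (k - θ)) := by
    have hG2 : 0 ≤ 2 * (1 + a) * (1 + b) * (1 - c)
        - (1 + a) ^ 2 * A2 ^ 2 - (1 + b) ^ 2 * A1 ^ 2 := by
      rw [hA1sq, hA2sq]; exact hGdiff
    nlinarith [mul_nonneg hh.le hG2, hX, hb1]
  -- final assembly
  set Kv : ℝ := ρ * gam v * (-hfun e θs * A2) - ρ * hfun e θ * gam v ^ 2 * c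
      + ρ * hfun e θ * gam v ^ 2 with hKv
  have hKid : ((1 + a) * Kv + (1 + b) * (ρ * k) - (1 + b) * (ρ * θ)) * A1 ^ 2
      = ρ * ((1 + a) * (hfun e θ * (1 - c)) - (1 + a) * (hfun e θs * (A1 * A2))
        + A1 ^ 2 * ((1 + b) * (k - θ))) := by
    rw [hKv, hgam]
    field_simp
    ring
  have hmain : 0 ≤ (1 + a) * Kv + (1 + b) * (ρ * k) - (1 + b) * (ρ * θ) := by
    by_contra hcon
    push_neg at hcon
    nlinarith [hKid, mul_nonneg hρ.le hT, mul_pos (neg_pos.mpr hcon) (pow_pos hA1 2)]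
  have hfin : (1 + b) * (ρ * k) - (1 + b) * (ρ * θ)
      ≤ (1 + b) * pstar e σ θs - (1 + b) * (ρ * θ) := by
    have := mul_le_mul_of_nonneg_left hps hb1.le
    linarith
  nlinarith [hmain, hfin]
end
end

section
/- Let e : (0,∞) → ℝ be a continuously differentiable Synge-type EOS. Let T > 0 and let ρ, v, p : ℝ × (0,T) → ℝ be continuously differentiable functions with ρ(x,t) > 0, p(x,t) > 0, |v(x,t)| < 1 for all (x,t), satisfying the one-dimensional relativistic Euler equations: with θ = p/ρ, γ = (1−v²)^{−1/2}, h = 1 + θ + e(θ), ∂_t(ργ) + ∂_x(ργv) = 0, ∂_t(ρhγ²v) + ∂_x(ρhγ²v² + p) = 0, and ∂_t(ρhγ² − p) + ∂_x(ρhγ²v) = 0 on ℝ × (0,T). Then the specific entropy S = −ln ρ + Z(θ) satisfies the transport equation ∂_t S + v·∂_x S = 0 on ℝ × (0,T). -/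
noncomputable section

/-- Lorentz factor `γ = (1 − v²)^{−1/2}` for a scalar velocity. -/
def gam1 (v : ℝ) : ℝ := 1 / Real.sqrt (1 - v ^ 2)

lemma slice_pack (e R V P : ℝ → ℝ) (s R' V' P' : ℝ)
    (hR : HasDerivAt R R' s) (hV : HasDerivAt V V' s) (hP : HasDerivAt P P' s)
    (ha0 : 0 < R s) (hc0 : 0 < P s) (hv1 : |V s| < 1)
    (hed : HasDerivAt e (deriv e (P s / R s)) (P s / R s))
    (hZ : HasDerivAt (Zfun e) (deriv e (P s / R s) * R s / P s) (P s / R s)) :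
    deriv (fun y => R y * gam1 (V y)) s
        = R' / Real.sqrt (1 - V s ^ 2)
          + R s * (V s * V' / Real.sqrt (1 - V s ^ 2) ^ 3) ∧
    deriv (fun y => R y * gam1 (V y) * V y) s
        = (R' / Real.sqrt (1 - V s ^ 2)
            + R s * (V s * V' / Real.sqrt (1 - V s ^ 2) ^ 3)) * V s
          + R s / Real.sqrt (1 - V s ^ 2) * V' ∧
    deriv (fun y => R y * hfun e (P y / R y) * gam1 (V y) ^ 2 * V y) s
        = (R' * hfun e (P s / R s) / Real.sqrt (1 - V s ^ 2) ^ 2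
            + R s * ((1 + deriv e (P s / R s)) * ((P' * R s - P s * R') / R s ^ 2))
                / Real.sqrt (1 - V s ^ 2) ^ 2
            + R s * hfun e (P s / R s) * (2 * V s * V' / Real.sqrt (1 - V s ^ 2) ^ 4)) * V s
          + R s * hfun e (P s / R s) / Real.sqrt (1 - V s ^ 2) ^ 2 * V' ∧
    deriv (fun y => R y * hfun e (P y / R y) * gam1 (V y) ^ 2 * (V y) ^ 2 + P y) s
        = (R' * hfun e (P s / R s) / Real.sqrt (1 - V s ^ 2) ^ 2
            + R s * ((1 + deriv e (P s / R s)) * ((P' * R s - P s * R') / R s ^ 2))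
                / Real.sqrt (1 - V s ^ 2) ^ 2
            + R s * hfun e (P s / R s) * (2 * V s * V' / Real.sqrt (1 - V s ^ 2) ^ 4)) * V s ^ 2
          + R s * hfun e (P s / R s) / Real.sqrt (1 - V s ^ 2) ^ 2 * (2 * V s * V') + P' ∧
    deriv (fun y => R y * hfun e (P y / R y) * gam1 (V y) ^ 2 - P y) s
        = (R' * hfun e (P s / R s) / Real.sqrt (1 - V s ^ 2) ^ 2
            + R s * ((1 + deriv e (P s / R s)) * ((P' * R s - P s * R') / R s ^ 2))
                / Real.sqrt (1 - V s ^ 2) ^ 2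
            + R s * hfun e (P s / R s) * (2 * V s * V' / Real.sqrt (1 - V s ^ 2) ^ 4)) - P' ∧
    deriv (fun y => -Real.log (R y) + Zfun e (P y / R y)) s
        = -(R' / R s) + deriv e (P s / R s) * R s / P s * ((P' * R s - P s * R') / R s ^ 2) := by
  have hb1 : V s ^ 2 < 1 := by
    have h := abs_lt.mp hv1
    nlinarith [h.1, h.2]
  have hu : 0 < 1 - V s ^ 2 := by linarith
  have hg0 : 0 < Real.sqrt (1 - V s ^ 2) := Real.sqrt_pos.mpr hu
  have hg2 : Real.sqrt (1 - V s ^ 2) ^ 2 = 1 - V s ^ 2 := Real.sq_sqrt hu.le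
  have hq : HasDerivAt (fun y => 1 - V y ^ 2) (-(2 * V s * V')) s := by
    have := (hasDerivAt_const s (1:ℝ)).sub (hV.pow 2)
    refine this.congr_deriv ?_
    simp
  have hsq : HasDerivAt (fun y => Real.sqrt (1 - V y ^ 2))
      (-(2 * V s * V') / (2 * Real.sqrt (1 - V s ^ 2))) s := hq.sqrt hu.ne'
  have hgam : HasDerivAt (fun y => gam1 (V y))
      (V s * V' / Real.sqrt (1 - V s ^ 2) ^ 3) s := by
    have h := (hasDerivAt_const s (1:ℝ)).div hsq hg0.ne'
    simp only [gam1]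
    refine h.congr_deriv ?_
    field_simp
    ring
  have hθ : HasDerivAt (fun y => P y / R y) ((P' * R s - P s * R') / R s ^ 2) s :=
    hP.div hR ha0.ne'
  have he' : HasDerivAt (fun y => e (P y / R y))
      (deriv e (P s / R s) * ((P' * R s - P s * R') / R s ^ 2)) s := by
    have := hed.comp s hθ
    exact this
  have hH : HasDerivAt (fun y => hfun e (P y / R y))
      ((1 + deriv e (P s / R s)) * ((P' * R s - P s * R') / R s ^ 2)) s := by
    simp only [hfun]
    refine (((hasDerivAt_const s (1:ℝ)).add hθ).add he').congr_deriv ?_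
    ring
  have hγ2 : HasDerivAt (fun y => gam1 (V y) ^ 2)
      (2 * gam1 (V s) ^ 1 * (V s * V' / Real.sqrt (1 - V s ^ 2) ^ 3)) s := hgam.pow 2
  have hEcore : HasDerivAt (fun y => R y * hfun e (P y / R y) * gam1 (V y) ^ 2)
      (R' * hfun e (P s / R s) / Real.sqrt (1 - V s ^ 2) ^ 2
        + R s * ((1 + deriv e (P s / R s)) * ((P' * R s - P s * R') / R s ^ 2))
            / Real.sqrt (1 - V s ^ 2) ^ 2
        + R s * hfun e (P s / R s) * (2 * V s * V' / Real.sqrt (1 - V s ^ 2) ^ 4)) s := by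
    refine ((hR.mul hH).mul hγ2).congr_deriv ?_
    simp only [gam1, Pi.mul_apply]
    field_simp
  have hZc : HasDerivAt (fun y => Zfun e (P y / R y))
      (deriv e (P s / R s) * R s / P s * ((P' * R s - P s * R') / R s ^ 2)) s := by
    have := hZ.comp s hθ
    exact this
  have hlog : HasDerivAt (fun y => Real.log (R y)) (R' / R s) s := hR.log ha0.ne'
  refine ⟨?_, ?_, ?_, ?_, ?_, ?_⟩
  · refine (hR.mul hgam).deriv.trans ?_
    simp only [gam1]
    field_simp
  · refine ((hR.mul hgam).mul hV).deriv.trans ?_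
    simp only [gam1, Pi.mul_apply]
    field_simp
  · refine (hEcore.mul hV).deriv.trans ?_
    simp only [gam1]
    field_simp
  · refine ((hEcore.mul (hV.pow 2)).add hP).deriv.trans ?_
    simp only [gam1, Pi.pow_apply, Nat.cast_ofNat, Nat.reduceSub, pow_one]
    field_simp
  · exact (hEcore.sub hP).deriv
  · exact (hlog.neg.add hZc).deriv


set_option maxHeartbeats 4000000 in
lemma key_algebra (a b c g H ed Rt Vt Pt Rx Vx Px : ℝ)
    (ha : 0 < a) (hc : 0 < c) (hg : 0 < g) (hg2 : g ^ 2 = 1 - b ^ 2)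
    (h1 : (Rt / g + a * (b * Vt / g ^ 3))
        + ((Rx / g + a * (b * Vx / g ^ 3)) * b + a / g * Vx) = 0)
    (h2 : (Rt * H / g ^ 2 + a * ((1 + ed) * ((Pt * a - c * Rt) / a ^ 2)) / g ^ 2
            + a * H * (2 * b * Vt / g ^ 4)) * b + a * H / g ^ 2 * Vt
        + ((Rx * H / g ^ 2 + a * ((1 + ed) * ((Px * a - c * Rx) / a ^ 2)) / g ^ 2
            + a * H * (2 * b * Vx / g ^ 4)) * b ^ 2 + a * H / g ^ 2 * (2 * b * Vx) + Px) = 0)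
    (h3 : (Rt * H / g ^ 2 + a * ((1 + ed) * ((Pt * a - c * Rt) / a ^ 2)) / g ^ 2
            + a * H * (2 * b * Vt / g ^ 4)) - Pt
        + ((Rx * H / g ^ 2 + a * ((1 + ed) * ((Px * a - c * Rx) / a ^ 2)) / g ^ 2
            + a * H * (2 * b * Vx / g ^ 4)) * b + a * H / g ^ 2 * Vx) = 0) :
    -(Rt / a) + ed * a / c * ((Pt * a - c * Rt) / a ^ 2)
      + b * (-(Rx / a) + ed * a / c * ((Px * a - c * Rx) / a ^ 2)) = 0 := by
  have hw : (0:ℝ) < 1 - b ^ 2 := by nlinarith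
  have hane : a ≠ 0 := ha.ne'
  field_simp at h1 h2 h3 ⊢
  rw [show g ^ 4 = (g ^ 2) ^ 2 by ring, hg2] at h2 h3
  rw [hg2] at h1
  have H9 : ((1 - b ^ 2) ^ 2) * (-(Rt * c) + ed * (a * Pt - Rt * c) + b * (-(Rx * c) + ed * (a * Px - Rx * c))) = 0 := by
    linear_combination h3 - b * h2 - a * H * (1 - b ^ 2) * h1
  rcases mul_eq_zero.mp H9 with h | h
  · exact absurd h (pow_ne_zero 2 hw.ne')
  · linear_combination h

set_option maxHeartbeats 2000000 in
/-- For continuously differentiable solutions of the 1D relativistic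
Euler equations with a continuously differentiable Synge-type EOS, the specific entropy
`S = −ln ρ + Z(θ)`, `θ = p/ρ`, satisfies the transport equation `∂_t S + v ∂_x S = 0`. -/
theorem minimum_entropy_stmt18 (e : ℝ → ℝ)
    (heC1 : ContDiffOn ℝ 1 e (Set.Ioi (0 : ℝ)))
    (hpos : ∀ ξ : ℝ, 0 < ξ → 0 < e ξ)
    (hineq : ∀ ξ : ℝ, 0 < ξ → ξ / (e ξ + 1) < deriv e ξ)
    (T : ℝ) (hT : 0 < T)
    (ρ v p : ℝ → ℝ → ℝ)
    (hρC1 : ContDiffOn ℝ 1 (fun q : ℝ × ℝ => ρ q.1 q.2) (Set.univ ×ˢ Set.Ioo 0 T))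
    (hvC1 : ContDiffOn ℝ 1 (fun q : ℝ × ℝ => v q.1 q.2) (Set.univ ×ˢ Set.Ioo 0 T))
    (hpC1 : ContDiffOn ℝ 1 (fun q : ℝ × ℝ => p q.1 q.2) (Set.univ ×ˢ Set.Ioo 0 T))
    (hadm : ∀ x : ℝ, ∀ t ∈ Set.Ioo (0 : ℝ) T,
      0 < ρ x t ∧ 0 < p x t ∧ |v x t| < 1)
    (heuler_mass : ∀ x : ℝ, ∀ t ∈ Set.Ioo (0 : ℝ) T,
      deriv (fun s => ρ x s * gam1 (v x s)) t
        + deriv (fun y => ρ y t * gam1 (v y t) * v y t) x = 0)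
    (heuler_mom : ∀ x : ℝ, ∀ t ∈ Set.Ioo (0 : ℝ) T,
      deriv (fun s => ρ x s * hfun e (p x s / ρ x s) * gam1 (v x s) ^ 2 * v x s) t
        + deriv (fun y => ρ y t * hfun e (p y t / ρ y t) * gam1 (v y t) ^ 2 * (v y t) ^ 2
            + p y t) x = 0)
    (heuler_energy : ∀ x : ℝ, ∀ t ∈ Set.Ioo (0 : ℝ) T,
      deriv (fun s => ρ x s * hfun e (p x s / ρ x s) * gam1 (v x s) ^ 2 - p x s) t
        + deriv (fun y => ρ y t * hfun e (p y t / ρ y t) * gam1 (v y t) ^ 2 * v y t) x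
          = 0) :
    ∀ x : ℝ, ∀ t ∈ Set.Ioo (0 : ℝ) T,
      deriv (fun s => -Real.log (ρ x s) + Zfun e (p x s / ρ x s)) t
        + v x t * deriv (fun y => -Real.log (ρ y t) + Zfun e (p y t / ρ y t)) x = 0 := by
  intro x t ht
  obtain ⟨hρ0, hp0, hv1⟩ := hadm x t ht
  have hopen : IsOpen ((Set.univ : Set ℝ) ×ˢ Set.Ioo (0:ℝ) T) := isOpen_univ.prod isOpen_Ioo
  have hmem : ((x, t) : ℝ × ℝ) ∈ (Set.univ : Set ℝ) ×ˢ Set.Ioo (0:ℝ) T := ⟨Set.mem_univ x, ht⟩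
  have mk_slice : ∀ f : ℝ → ℝ → ℝ,
      ContDiffOn ℝ 1 (fun q : ℝ × ℝ => f q.1 q.2) (Set.univ ×ˢ Set.Ioo 0 T) →
      HasDerivAt (fun s => f x s) (deriv (fun s => f x s) t) t ∧
      HasDerivAt (fun y => f y t) (deriv (fun y => f y t) x) x := by
    intro f hf
    have hd : DifferentiableAt ℝ (fun q : ℝ × ℝ => f q.1 q.2) (x, t) :=
      (hf.contDiffAt (hopen.mem_nhds hmem)).differentiableAt one_ne_zero
    constructor
    · have h : DifferentiableAt ℝ (fun s => f x s) t := by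
        have h2 := hd.comp t ((differentiableAt_const x).prodMk differentiableAt_id)
        exact h2
      exact h.hasDerivAt
    · have h : DifferentiableAt ℝ (fun y => f y t) x := by
        have h2 := hd.comp x ((differentiableAt_id (x := x) (𝕜 := ℝ)).prodMk (differentiableAt_const t))
        exact h2
      exact h.hasDerivAt
  obtain ⟨hρt, hρx⟩ := mk_slice ρ hρC1
  obtain ⟨hvt, hvx⟩ := mk_slice v hvC1
  obtain ⟨hpt, hpx⟩ := mk_slice p hpC1
  have hθpos : 0 < p x t / ρ x t := div_pos hp0 hρ0
  have hed : HasDerivAt e (deriv e (p x t / ρ x t)) (p x t / ρ x t) :=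
    ((heC1.contDiffAt (isOpen_Ioi.mem_nhds hθpos)).differentiableAt one_ne_zero).hasDerivAt
  have hcont : ContinuousOn (fun ξ => deriv e ξ / ξ) (Set.Ioi 0) :=
    (heC1.continuousOn_deriv_of_isOpen isOpen_Ioi le_rfl).div continuousOn_id
      (fun ξ hξ => ne_of_gt hξ)
  have hZ0 : HasDerivAt (Zfun e) (deriv e (p x t / ρ x t) / (p x t / ρ x t))
      (p x t / ρ x t) := by
    have hsub : Set.uIcc (1:ℝ) (p x t / ρ x t) ⊆ Set.Ioi 0 := by
      intro ξ hξ
      exact lt_of_lt_of_le (lt_min one_pos hθpos) hξ.1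
    have h1 : IntervalIntegrable (fun ξ => deriv e ξ / ξ) MeasureTheory.volume 1
        (p x t / ρ x t) := (hcont.mono hsub).intervalIntegrable
    have h2 := hcont.stronglyMeasurableAtFilter isOpen_Ioi (μ := MeasureTheory.volume)
      (p x t / ρ x t) hθpos
    have h3 : ContinuousAt (fun ξ => deriv e ξ / ξ) (p x t / ρ x t) :=
      hcont.continuousAt (isOpen_Ioi.mem_nhds hθpos)
    exact intervalIntegral.integral_hasDerivAt_right h1 h2 h3
  have hZ : HasDerivAt (Zfun e) (deriv e (p x t / ρ x t) * ρ x t / p x t)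
      (p x t / ρ x t) := by
    rw [show deriv e (p x t / ρ x t) * ρ x t / p x t
        = deriv e (p x t / ρ x t) / (p x t / ρ x t) from by
      rw [div_div_eq_mul_div]]
    exact hZ0
  obtain ⟨t1, t2, t3, t4, t5, t6⟩ :=
    slice_pack e (fun s => ρ x s) (fun s => v x s) (fun s => p x s) t _ _ _
      hρt hvt hpt hρ0 hp0 hv1 hed hZ
  obtain ⟨x1, x2, x3, x4, x5, x6⟩ :=
    slice_pack e (fun y => ρ y t) (fun y => v y t) (fun y => p y t) x _ _ _
      hρx hvx hpx hρ0 hp0 hv1 hed hZ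
  have hm := heuler_mass x t ht
  have hmo := heuler_mom x t ht
  have hen := heuler_energy x t ht
  have hb1 : v x t ^ 2 < 1 := by
    have h := abs_lt.mp hv1
    nlinarith [h.1, h.2]
  have hu : (0:ℝ) < 1 - v x t ^ 2 := by linarith
  have hg0 : 0 < Real.sqrt (1 - v x t ^ 2) := Real.sqrt_pos.mpr hu
  have hg2 : Real.sqrt (1 - v x t ^ 2) ^ 2 = 1 - v x t ^ 2 := Real.sq_sqrt hu.le
  rw [t1, x2] at hm
  rw [t3, x4] at hmo
  rw [t5, x3] at hen
  rw [t6, x6]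
  exact key_algebra _ _ _ _ _ _ _ _ _ _ _ _ hρ0 hp0 hg0 hg2 hm hmo hen
end
end
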